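/- arXiv:2011.01556 — 8 statements merged into one kernel-verified Lean document; each statement's English description precedes it below -/
import Mathlib

section
/- Affine-invariant Newton–Kantorovich theorem (existence part): Let X and Y be real Banach spaces, û ∈ X, and α, β, δ > 0. Let D be the open ball in X of radius 2α + δ centered at û. Let F : X → Y and F' : X → L(X, Y) be maps such that F has Fréchet derivative F'(v) at every point v ∈ D. Suppose there is a continuous linear equivalence A : X ≃ Y whose underlying continuous linear map equals F'(û), and that: ‖A⁻¹(F(û))‖ ≤ α; ‖A⁻¹ ∘ (F'(v) − F'(w))‖_{L(X,X)} ≤ β‖v − w‖ for all v, w ∈ D; and αβ ≤ 1/2. Set ρ = (1 − √(1 − 2αβ))/β. Then there exists u in the closed ball of radius ρ centered at û with F(u) = 0. -/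
/-!
Precondition by `A⁻¹`: `G = A⁻¹ ∘ F` satisfies `G' û = id` and `‖G' x - G' û‖ ≤ β ‖x - û‖`,
so the value of `G` after one chord step `x ↦ x - G x` is a Taylor remainder, bounded by
`β (‖x - û‖ ‖h‖ + ‖h‖² / 2)` with `h = G x`. This makes the chord iterates majorized by the scalar
iterates `t ↦ t + p t` from `0`, where `p t = β t² / 2 - t + α`: if `‖x - û‖ ≤ t` and `‖G x‖ ≤ p t`,
the same holds at the next step with `t + p t`, because `p (t + p t) = β t p t + β (p t)² / 2`.
The scalar iterates increase and stay below the smallest root `ρ` of `p`, so the steps `p t` are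
summable, the chord iterates converge in the closed ball of radius `ρ`, and their limit is a zero.
-/

open Set Metric Filter Topology

theorem norm_image_add_sub_sub_fderiv_le
    {E F : Type*} [NormedAddCommGroup E] [NormedSpace ℝ E] [NormedAddCommGroup F]
    [NormedSpace ℝ F] {f : E → F} {f' : E → E →L[ℝ] F} {s : Set E} {x₀ x h : E} {β : ℝ}
    (hβ : 0 ≤ β) (hf : ∀ y ∈ s, HasFDerivAt f (f' y) y)
    (hf' : ∀ y ∈ s, ‖f' y - f' x₀‖ ≤ β * ‖y - x₀‖) (hseg : segment ℝ x (x + h) ⊆ s) :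
    ‖f (x + h) - f x - f' x₀ h‖ ≤ β * (‖x - x₀‖ * ‖h‖ + ‖h‖ ^ 2 / 2) := by
  have hmem : ∀ t ∈ Icc (0 : ℝ) 1, x + t • h ∈ s := fun t ht ↦
    hseg (by rw [segment_eq_image']; exact ⟨t, ht, by simp⟩)
  set φ : ℝ → F := fun t ↦ f (x + t • h) - f x - t • f' x₀ h
  have hφ : ∀ t ∈ Icc (0 : ℝ) 1, HasDerivAt φ (f' (x + t • h) h - f' x₀ h) t := by
    intro t ht
    have hline : HasDerivAt (fun t : ℝ ↦ x + t • h) h t := by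
      simpa using ((hasDerivAt_id t).smul_const h).const_add x
    exact (((hf _ (hmem t ht)).comp_hasDerivAt t hline).sub_const (f x)).sub
      (by simpa using (hasDerivAt_id t).smul_const (f' x₀ h))
  have hB : ∀ t : ℝ, HasDerivAt (fun t ↦ β * (‖x - x₀‖ * ‖h‖ * t + ‖h‖ ^ 2 / 2 * t ^ 2))
      (β * (‖x - x₀‖ * ‖h‖ + ‖h‖ ^ 2 * t)) t := by
    intro t
    refine ((((hasDerivAt_id t).const_mul (‖x - x₀‖ * ‖h‖)).add
      ((hasDerivAt_pow 2 t).const_mul (‖h‖ ^ 2 / 2))).const_mul β).congr_deriv ?_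
    push_cast; ring
  have hbound : ∀ t ∈ Ico (0 : ℝ) 1,
      ‖f' (x + t • h) h - f' x₀ h‖ ≤ β * (‖x - x₀‖ * ‖h‖ + ‖h‖ ^ 2 * t) := by
    intro t ht
    have hdist : ‖x + t • h - x₀‖ ≤ ‖x - x₀‖ + t * ‖h‖ := by
      calc ‖x + t • h - x₀‖ = ‖(x - x₀) + t • h‖ := by rw [add_sub_right_comm]
        _ ≤ ‖x - x₀‖ + t * ‖h‖ := (norm_add_le _ _).trans_eq
          (by rw [norm_smul, Real.norm_of_nonneg ht.1])
    calc ‖f' (x + t • h) h - f' x₀ h‖ = ‖(f' (x + t • h) - f' x₀) h‖ := rfl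
      _ ≤ ‖f' (x + t • h) - f' x₀‖ * ‖h‖ := ContinuousLinearMap.le_opNorm _ _
      _ ≤ β * ‖x + t • h - x₀‖ * ‖h‖ := by
        gcongr; exact hf' _ (hmem t (Ico_subset_Icc_self ht))
      _ ≤ β * (‖x - x₀‖ + t * ‖h‖) * ‖h‖ := by gcongr
      _ = β * (‖x - x₀‖ * ‖h‖ + ‖h‖ ^ 2 * t) := by ring
  simpa [φ] using image_norm_le_of_norm_deriv_right_le_deriv_boundary
    (fun t ht ↦ (hφ t ht).continuousAt.continuousWithinAt)
    (fun t ht ↦ (hφ t (Ico_subset_Icc_self ht)).hasDerivWithinAt) (by simp [φ]) hB hbound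
    (right_mem_Icc.2 zero_le_one)

noncomputable def kantorovichPoly (α β t : ℝ) : ℝ := β / 2 * t ^ 2 - t + α

-- the chord iteration `t ↦ t - p t / p' 0` for the majorant, since `p' 0 = -1`
noncomputable def kantorovichSeq (α β : ℝ) : ℕ → ℝ
  | 0 => 0
  | n + 1 => kantorovichSeq α β n + kantorovichPoly α β (kantorovichSeq α β n)

noncomputable def kantorovichRadius (α β : ℝ) : ℝ := (1 - √(1 - 2 * α * β)) / β

section Majorant

variable {α β ρ t : ℝ}

theorem kantorovichPoly_kantorovichRadius (hβ : β ≠ 0) (hαβ : α * β ≤ 1 / 2) :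
    kantorovichPoly α β (kantorovichRadius α β) = 0 := by
  have hsq := Real.sq_sqrt (show 0 ≤ 1 - 2 * α * β by linarith)
  unfold kantorovichPoly kantorovichRadius
  set q := √(1 - 2 * α * β)
  field_simp
  linear_combination hsq

theorem mul_kantorovichRadius_le_one (hβ : β ≠ 0) : β * kantorovichRadius α β ≤ 1 := by
  rw [kantorovichRadius, mul_div_cancel₀ _ hβ]
  linarith [Real.sqrt_nonneg (1 - 2 * α * β)]

theorem nonneg_of_kantorovichPoly_eq_zero (hα : 0 ≤ α) (hβ : 0 ≤ β)
    (hρ : kantorovichPoly α β ρ = 0) : 0 ≤ ρ := by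
  unfold kantorovichPoly at hρ
  nlinarith [mul_nonneg hβ (sq_nonneg ρ)]

theorem le_two_mul_of_kantorovichPoly_eq_zero (hα : 0 ≤ α) (hβ : 0 ≤ β)
    (hρ : kantorovichPoly α β ρ = 0) (hβρ : β * ρ ≤ 1) : ρ ≤ 2 * α := by
  have hρ₀ := nonneg_of_kantorovichPoly_eq_zero hα hβ hρ
  unfold kantorovichPoly at hρ
  nlinarith [mul_le_mul_of_nonneg_right hβρ hρ₀]

theorem kantorovichPoly_nonneg (hβ : 0 ≤ β) (hρ : kantorovichPoly α β ρ = 0)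
    (hβρ : β * ρ ≤ 1) (htρ : t ≤ ρ) : 0 ≤ kantorovichPoly α β t := by
  have : kantorovichPoly α β t = (ρ - t) * (1 - β / 2 * (t + ρ)) := by
    unfold kantorovichPoly at hρ ⊢; linear_combination hρ
  rw [this]
  exact mul_nonneg (by linarith) (by nlinarith)

theorem add_kantorovichPoly_le (hβ : 0 ≤ β) (hρ : kantorovichPoly α β ρ = 0) (ht : 0 ≤ t)
    (htρ : t ≤ ρ) : t + kantorovichPoly α β t ≤ ρ := by
  have : ρ - (t + kantorovichPoly α β t) = (ρ - t) * (β / 2 * (t + ρ)) := by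
    unfold kantorovichPoly at hρ ⊢; linear_combination -hρ
  have : 0 ≤ (ρ - t) * (β / 2 * (t + ρ)) :=
    mul_nonneg (by linarith) (mul_nonneg (by positivity) (by linarith))
  linarith

theorem kantorovichSeq_mem_Icc (hα : 0 ≤ α) (hβ : 0 ≤ β) (hρ : kantorovichPoly α β ρ = 0)
    (hβρ : β * ρ ≤ 1) (n : ℕ) : kantorovichSeq α β n ∈ Icc 0 ρ := by
  induction n with
  | zero => exact ⟨le_rfl, nonneg_of_kantorovichPoly_eq_zero hα hβ hρ⟩
  | succ n ih =>
    exact ⟨add_nonneg ih.1 (kantorovichPoly_nonneg hβ hρ hβρ ih.2),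
      add_kantorovichPoly_le hβ hρ ih.1 ih.2⟩

theorem sum_range_kantorovichPoly_kantorovichSeq (n : ℕ) :
    ∑ i ∈ Finset.range n, kantorovichPoly α β (kantorovichSeq α β i) = kantorovichSeq α β n := by
  induction n with
  | zero => rfl
  | succ n ih => rw [Finset.sum_range_succ, ih, kantorovichSeq]

theorem summable_kantorovichPoly_kantorovichSeq (hα : 0 ≤ α) (hβ : 0 ≤ β)
    (hρ : kantorovichPoly α β ρ = 0) (hβρ : β * ρ ≤ 1) :
    Summable fun n ↦ kantorovichPoly α β (kantorovichSeq α β n) :=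
  summable_of_sum_range_le
    (fun n ↦ kantorovichPoly_nonneg hβ hρ hβρ (kantorovichSeq_mem_Icc hα hβ hρ hβρ n).2)
    (fun n ↦ (sum_range_kantorovichPoly_kantorovichSeq n).trans_le
      (kantorovichSeq_mem_Icc hα hβ hρ hβρ n).2)

end Majorant

section Chord

variable {E : Type*} [NormedAddCommGroup E] [NormedSpace ℝ E] {G : E → E} {G' : E → E →L[ℝ] E}
  {x₀ : E} {α β ρ : ℝ}

theorem kantorovich_chord_step (hβ : 0 ≤ β) (hG : ∀ x ∈ closedBall x₀ ρ, HasFDerivAt G (G' x) x)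
    (hG' : ∀ x ∈ closedBall x₀ ρ, ‖G' x - G' x₀‖ ≤ β * ‖x - x₀‖)
    (hx₀ : G' x₀ = ContinuousLinearMap.id ℝ E) {x : E} {t : ℝ} (ht : 0 ≤ t)
    (hx : ‖x - x₀‖ ≤ t) (hGx : ‖G x‖ ≤ kantorovichPoly α β t)
    (htρ : t + kantorovichPoly α β t ≤ ρ) :
    ‖x - G x - x₀‖ ≤ t + kantorovichPoly α β t ∧
      ‖G (x - G x)‖ ≤ kantorovichPoly α β (t + kantorovichPoly α β t) := by
  have hstep : ‖x - G x - x₀‖ ≤ t + kantorovichPoly α β t := by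
    rw [sub_right_comm]; exact (norm_sub_le _ _).trans (add_le_add hx hGx)
  have hball : ∀ y, ‖y - x₀‖ ≤ t + kantorovichPoly α β t → y ∈ closedBall x₀ ρ :=
    fun y hy ↦ mem_closedBall_iff_norm.2 (hy.trans htρ)
  have hseg : segment ℝ x (x + -G x) ⊆ closedBall x₀ ρ := by
    refine (convex_closedBall x₀ ρ).segment_subset (hball x ?_) (hball _ ?_)
    · linarith [(norm_nonneg _).trans hGx]
    · rwa [← sub_eq_add_neg]
  -- since `G' x₀ = id`, the value `G (x - G x)` is a second-order Taylor remainder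
  have htaylor := norm_image_add_sub_sub_fderiv_le hβ hG hG' hseg
  rw [hx₀, ContinuousLinearMap.id_apply, sub_neg_eq_add, sub_add_cancel, ← sub_eq_add_neg,
    norm_neg] at htaylor
  refine ⟨hstep, htaylor.trans ?_⟩
  calc β * (‖x - x₀‖ * ‖G x‖ + ‖G x‖ ^ 2 / 2)
      ≤ β * (t * kantorovichPoly α β t + kantorovichPoly α β t ^ 2 / 2) := by gcongr
    _ = kantorovichPoly α β (t + kantorovichPoly α β t) := by unfold kantorovichPoly; ring

theorem exists_mem_closedBall_eq_zero_of_kantorovichPoly_eq_zero [CompleteSpace E]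
    (hG : ∀ x ∈ closedBall x₀ ρ, HasFDerivAt G (G' x) x)
    (hG' : ∀ x ∈ closedBall x₀ ρ, ‖G' x - G' x₀‖ ≤ β * ‖x - x₀‖)
    (hx₀ : G' x₀ = ContinuousLinearMap.id ℝ E) (hα : ‖G x₀‖ ≤ α) (hβ : 0 ≤ β)
    (hρ : kantorovichPoly α β ρ = 0) (hβρ : β * ρ ≤ 1) :
    ∃ x ∈ closedBall x₀ ρ, G x = 0 := by
  have hα₀ : 0 ≤ α := (norm_nonneg _).trans hα
  have hs := kantorovichSeq_mem_Icc hα₀ hβ hρ hβρ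
  set u : ℕ → E := fun n ↦ (fun x ↦ x - G x)^[n] x₀ with hu_def
  have hu_succ : ∀ n, u (n + 1) = u n - G (u n) := fun n ↦ Function.iterate_succ_apply' _ _ _
  have hu : ∀ n, ‖u n - x₀‖ ≤ kantorovichSeq α β n ∧
      ‖G (u n)‖ ≤ kantorovichPoly α β (kantorovichSeq α β n) := by
    intro n
    induction n with
    | zero => simpa [hu_def, kantorovichSeq, kantorovichPoly] using hα
    | succ n ih =>
      rw [hu_succ]
      exact kantorovich_chord_step hβ hG hG' hx₀ (hs n).1 ih.1 ih.2 (hs (n + 1)).2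
  have hcauchy : CauchySeq u := by
    refine cauchySeq_of_dist_le_of_summable _ (fun n ↦ ?_)
      (summable_kantorovichPoly_kantorovichSeq hα₀ hβ hρ hβρ)
    rw [dist_eq_norm, hu_succ, sub_sub_cancel]
    exact (hu n).2
  obtain ⟨x, hux⟩ := cauchySeq_tendsto_of_complete hcauchy
  have hx : x ∈ closedBall x₀ ρ := isClosed_closedBall.mem_of_tendsto hux
    (Eventually.of_forall fun n ↦ mem_closedBall_iff_norm.2 ((hu n).1.trans (hs n).2))
  have hG_lim : Tendsto (fun n ↦ G (u n)) atTop (𝓝 (x - x)) := by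
    have : (fun n ↦ G (u n)) = fun n ↦ u n - u (n + 1) :=
      funext fun n ↦ by rw [hu_succ, sub_sub_cancel]
    rw [this]
    exact hux.sub (hux.comp (tendsto_add_atTop_nat 1))
  refine ⟨x, hx, ?_⟩
  rw [← sub_self x]
  exact tendsto_nhds_unique ((hG x hx).continuousAt.tendsto.comp hux) hG_lim

end Chord

theorem newton_kantorovich_existence_general
    {X Y : Type*} [NormedAddCommGroup X] [NormedSpace ℝ X] [CompleteSpace X]
    [NormedAddCommGroup Y] [NormedSpace ℝ Y] [CompleteSpace Y]
    (uhat : X) (α β δ : ℝ) (hβ : 0 < β) (hδ : 0 < δ)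
    (F : X → Y) (F' : X → X →L[ℝ] Y)
    (hderiv : ∀ v ∈ Metric.ball uhat (2 * α + δ), HasFDerivAt F (F' v) v)
    (A : X ≃L[ℝ] Y) (hA : (A : X →L[ℝ] Y) = F' uhat)
    (hα' : ‖(A.symm : Y →L[ℝ] X) (F uhat)‖ ≤ α)
    (hβ' : ∀ v ∈ Metric.ball uhat (2 * α + δ), ∀ w ∈ Metric.ball uhat (2 * α + δ),
      ‖(A.symm : Y →L[ℝ] X).comp (F' v - F' w)‖ ≤ β * ‖v - w‖)
    (hαβ : α * β ≤ 1 / 2) :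
    ∃ u ∈ Metric.closedBall uhat ((1 - Real.sqrt (1 - 2 * α * β)) / β), F u = 0 := by
  have hα : 0 ≤ α := (norm_nonneg _).trans hα'
  have hρ := kantorovichPoly_kantorovichRadius hβ.ne' hαβ
  have hβρ := mul_kantorovichRadius_le_one (α := α) hβ.ne'
  have hρ₀ := nonneg_of_kantorovichPoly_eq_zero hα hβ.le hρ
  have hball : closedBall uhat (kantorovichRadius α β) ⊆ ball uhat (2 * α + δ) :=
    closedBall_subset_ball (by linarith [le_two_mul_of_kantorovichPoly_eq_zero hα hβ.le hρ hβρ])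
  obtain ⟨u, hu, hFu⟩ := exists_mem_closedBall_eq_zero_of_kantorovichPoly_eq_zero
    (G := fun v ↦ (A.symm : Y →L[ℝ] X) (F v)) (G' := fun v ↦ (A.symm : Y →L[ℝ] X).comp (F' v))
    (fun v hv ↦ (A.symm : Y →L[ℝ] X).hasFDerivAt.comp v (hderiv v (hball hv)))
    (fun v hv ↦ by
      rw [← ContinuousLinearMap.comp_sub]
      exact hβ' v (hball hv) uhat (hball (mem_closedBall_self hρ₀)))
    (by rw [← hA]; ext; simp) hα' hβ.le hρ hβρ
  exact ⟨u, hu, by simpa using hFu⟩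

/-- Affine-invariant Newton–Kantorovich theorem (existence part). -/
theorem newton_kantorovich_existence
    {X Y : Type*} [NormedAddCommGroup X] [NormedSpace ℝ X] [CompleteSpace X]
    [NormedAddCommGroup Y] [NormedSpace ℝ Y] [CompleteSpace Y]
    (uhat : X) (α β δ : ℝ) (hα : 0 < α) (hβ : 0 < β) (hδ : 0 < δ)
    (F : X → Y) (F' : X → X →L[ℝ] Y)
    (hderiv : ∀ v ∈ Metric.ball uhat (2 * α + δ), HasFDerivAt F (F' v) v)
    (A : X ≃L[ℝ] Y) (hA : (A : X →L[ℝ] Y) = F' uhat)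
    (hα' : ‖(A.symm : Y →L[ℝ] X) (F uhat)‖ ≤ α)
    (hβ' : ∀ v ∈ Metric.ball uhat (2 * α + δ), ∀ w ∈ Metric.ball uhat (2 * α + δ),
      ‖(A.symm : Y →L[ℝ] X).comp (F' v - F' w)‖ ≤ β * ‖v - w‖)
    (hαβ : α * β ≤ 1 / 2) :
    ∃ u ∈ Metric.closedBall uhat ((1 - Real.sqrt (1 - 2 * α * β)) / β), F u = 0 :=
  newton_kantorovich_existence_general uhat α β δ hβ hδ F F' hderiv A hA hα' hβ' hαβ
end

section
/- Affine-invariant Newton–Kantorovich theorem (invertibility part): Let X and Y be real Banach spaces, û ∈ X, and α, β, δ > 0. Let D be the open ball in X of radius 2α + δ centered at û. Let F : X → Y and F' : X → L(X, Y) be maps such that F has Fréchet derivative F'(v) at every point v ∈ D. Suppose there is a continuous linear equivalence A : X ≃ Y whose underlying continuous linear map equals F'(û), and that: ‖A⁻¹(F(û))‖ ≤ α; ‖A⁻¹ ∘ (F'(v) − F'(w))‖_{L(X,X)} ≤ β‖v − w‖ for all v, w ∈ D; and αβ ≤ 1/2. Set ρ = (1 − √(1 − 2αβ))/β. Then for every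 φ in the open ball of radius ρ centered at û, the continuous linear map F'(φ) : X → Y is bijective. -/
/-- Affine-invariant Newton–Kantorovich theorem (invertibility part). -/
theorem newton_kantorovich_invertibility
    {X Y : Type*} [NormedAddCommGroup X] [NormedSpace ℝ X] [CompleteSpace X]
    [NormedAddCommGroup Y] [NormedSpace ℝ Y] [CompleteSpace Y]
    (uhat : X) (α β δ : ℝ) (hα : 0 < α) (hβ : 0 < β) (hδ : 0 < δ)
    (F : X → Y) (F' : X → X →L[ℝ] Y)
    (hderiv : ∀ v ∈ Metric.ball uhat (2 * α + δ), HasFDerivAt F (F' v) v)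
    (A : X ≃L[ℝ] Y) (hA : (A : X →L[ℝ] Y) = F' uhat)
    (hα' : ‖(A.symm : Y →L[ℝ] X) (F uhat)‖ ≤ α)
    (hβ' : ∀ v ∈ Metric.ball uhat (2 * α + δ), ∀ w ∈ Metric.ball uhat (2 * α + δ),
      ‖(A.symm : Y →L[ℝ] X).comp (F' v - F' w)‖ ≤ β * ‖v - w‖)
    (hαβ : α * β ≤ 1 / 2) :
    ∀ φ ∈ Metric.ball uhat ((1 - Real.sqrt (1 - 2 * α * β)) / β),
      Function.Bijective (F' φ) := by
  intro φ hφ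
  have h2αβ : (0:ℝ) ≤ 1 - 2 * α * β := by nlinarith
  have hs0 : 0 ≤ Real.sqrt (1 - 2 * α * β) := Real.sqrt_nonneg _
  have hs1 : Real.sqrt (1 - 2 * α * β) ≤ 1 :=
    Real.sqrt_le_one.mpr (by nlinarith)
  have hsq : Real.sqrt (1 - 2 * α * β) ^ 2 = 1 - 2 * α * β := Real.sq_sqrt h2αβ
  have hsge : 1 - 2 * α * β ≤ Real.sqrt (1 - 2 * α * β) := by nlinarith
  have hρ2α : (1 - Real.sqrt (1 - 2 * α * β)) / β ≤ 2 * α := by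
    rw [div_le_iff₀ hβ]; nlinarith
  rw [Metric.mem_ball, dist_eq_norm] at hφ
  have hφD : φ ∈ Metric.ball uhat (2 * α + δ) := by
    rw [Metric.mem_ball, dist_eq_norm]
    calc ‖φ - uhat‖ < (1 - Real.sqrt (1 - 2 * α * β)) / β := hφ
      _ ≤ 2 * α := hρ2α
      _ < 2 * α + δ := by linarith
  have huD : uhat ∈ Metric.ball uhat (2 * α + δ) := by
    simp [Metric.mem_ball]; positivity
  set t : X →L[ℝ] X := (A.symm : Y →L[ℝ] X).comp (F' uhat - F' φ) with ht_def
  have ht : ‖t‖ < 1 := by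
    have h1 := hβ' uhat huD φ hφD
    have h2 : β * ‖uhat - φ‖ < 1 - Real.sqrt (1 - 2 * α * β) := by
      rw [norm_sub_rev]
      calc β * ‖φ - uhat‖ < β * ((1 - Real.sqrt (1 - 2 * α * β)) / β) := by
            exact (mul_lt_mul_iff_right₀ hβ).mpr hφ
        _ = 1 - Real.sqrt (1 - 2 * α * β) := by field_simp
    calc ‖t‖ ≤ β * ‖uhat - φ‖ := h1
      _ < 1 - Real.sqrt (1 - 2 * α * β) := h2
      _ ≤ 1 := by linarith
  have hone : (1 : X →L[ℝ] X) - t = (A.symm : Y →L[ℝ] X).comp (F' φ) := by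
    ext x
    simp [ht_def, ← hA, map_sub]
  have hu : IsUnit ((A.symm : Y →L[ℝ] X).comp (F' φ)) := by
    rw [← hone]
    exact (Units.oneSub t ht).isUnit
  have hbij : Function.Bijective ((A.symm : Y →L[ℝ] X).comp (F' φ)) := by
    obtain ⟨u, hu⟩ := hu
    have := (ContinuousLinearEquiv.unitsEquiv ℝ X u).bijective
    have heq : ⇑(ContinuousLinearEquiv.unitsEquiv ℝ X u) = ⇑((A.symm : Y →L[ℝ] X).comp (F' φ)) := by
      funext x
      rw [ContinuousLinearEquiv.unitsEquiv_apply, hu]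
    rwa [heq] at this
  have hfun : ⇑(F' φ) = ⇑A ∘ ⇑((A.symm : Y →L[ℝ] X).comp (F' φ)) := by
    funext x; simp
  rw [hfun]
  exact A.bijective.comp hbij
end

section
/- Affine-invariant Newton–Kantorovich theorem (uniqueness part): Let X and Y be real Banach spaces, û ∈ X, and α, β, δ > 0. Let D be the open ball in X of radius 2α + δ centered at û. Let F : X → Y and F' : X → L(X, Y) be maps such that F has Fréchet derivative F'(v) at every point v ∈ D. Suppose there is a continuous linear equivalence A : X ≃ Y whose underlying continuous linear map equals F'(û), and that: ‖A⁻¹(F(û))‖ ≤ α; ‖A⁻¹ ∘ (F'(v) − F'(w))‖_{L(X,X)} ≤ β‖v − w‖ for all v, w ∈ D; and αβ ≤ 1/2. Then any two points u₁, u₂ lying in the closed ball of radius 2α centered at û and satisfying F(u₁) = 0 and F(u₂) = 0 are equal. -/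
open Metric Set Filter Topology Function

/-! The zeros of `F` are the fixed points of the chord map `G x = x - A⁻¹ F x`. Since `G' û = 0`
and `A⁻¹ F'` is `β`-Lipschitz, comparing with a scalar bound along segments gives
`‖G b - G a‖ ≤ β · (mean distance of a, b to û) · ‖b - a‖` on the ball of radius `2α`.
At `αβ = 1/2` this is no uniform contraction, but the chord iterates from `û` stay at distance
`≤ 2α (1 - 1/(n+1))` from `û` (compare with the scalar majorant `t ↦ β t² / 2 + α`), so step `n`
contracts the distance to any fixed point in the ball by `1 - 1/(2(n+1))`. These factors have
product `O(n^(-1/2))`, so the iterates converge to every such fixed point. -/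

lemma norm_image_sub_sub_le_of_hasFDerivAt_segment {E F : Type*}
    [NormedAddCommGroup E] [NormedSpace ℝ E] [NormedAddCommGroup F] [NormedSpace ℝ F]
    {f : E → F} {f' : E → E →L[ℝ] F} {L : E →L[ℝ] F} {a b c : E} {β : ℝ} (hβ : 0 ≤ β)
    (hf : ∀ x ∈ segment ℝ a b, HasFDerivAt f (f' x) x)
    (hf' : ∀ x ∈ segment ℝ a b, ‖f' x - L‖ ≤ β * ‖x - c‖) :
    ‖f b - f a - L (b - a)‖ ≤ β * ((‖a - c‖ + ‖b - c‖) / 2) * ‖b - a‖ := by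
  set p : ℝ → E := fun t => a + t • (b - a)
  have hp : ∀ t ∈ Icc (0 : ℝ) 1, p t ∈ segment ℝ a b := fun t ht => by
    rw [segment_eq_image']; exact mem_image_of_mem _ ht
  have hpc : ∀ t ∈ Icc (0 : ℝ) 1, ‖p t - c‖ ≤ (1 - t) * ‖a - c‖ + t * ‖b - c‖ := by
    intro t ht
    calc ‖p t - c‖ = ‖(1 - t) • (a - c) + t • (b - c)‖ := by congr 1; module
      _ ≤ (1 - t) * ‖a - c‖ + t * ‖b - c‖ := by
        refine (norm_add_le _ _).trans_eq ?_
        rw [norm_smul, norm_smul, Real.norm_of_nonneg (by linarith [ht.2]),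
          Real.norm_of_nonneg ht.1]
  set g : ℝ → F := fun t => f (p t) - f a - t • L (b - a)
  have hg : ∀ t ∈ Icc (0 : ℝ) 1, HasDerivAt g ((f' (p t) - L) (b - a)) t := by
    intro t ht
    have hpt : HasDerivAt p (b - a) t :=
      (((hasDerivAt_id t).smul_const (b - a)).const_add a).congr_deriv (one_smul ℝ _)
    exact ((((hf _ (hp t ht)).comp_hasDerivAt t hpt).sub_const (f a)).sub
      ((hasDerivAt_id t).smul_const (L (b - a)))).congr_deriv (by simp)
  set B : ℝ → ℝ := fun t => β * ‖b - a‖ * (‖a - c‖ * t + (‖b - c‖ - ‖a - c‖) * (t ^ 2 / 2))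
  have hB : ∀ t, HasDerivAt B (β * ‖b - a‖ * ((1 - t) * ‖a - c‖ + t * ‖b - c‖)) t := by
    intro t
    refine ((((hasDerivAt_id t).const_mul ‖a - c‖).add
      (((hasDerivAt_pow 2 t).div_const 2).const_mul (‖b - c‖ - ‖a - c‖))).const_mul
      (β * ‖b - a‖)).congr_deriv ?_
    push_cast; ring
  have hbound : ∀ t ∈ Ico (0 : ℝ) 1,
      ‖(f' (p t) - L) (b - a)‖ ≤ β * ‖b - a‖ * ((1 - t) * ‖a - c‖ + t * ‖b - c‖) := by
    intro t ht
    have ht' := Ico_subset_Icc_self ht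
    calc ‖(f' (p t) - L) (b - a)‖ ≤ ‖f' (p t) - L‖ * ‖b - a‖ := (f' (p t) - L).le_opNorm _
      _ ≤ β * ((1 - t) * ‖a - c‖ + t * ‖b - c‖) * ‖b - a‖ := by
        gcongr
        exact (hf' _ (hp t ht')).trans (by gcongr; exact hpc t ht')
      _ = β * ‖b - a‖ * ((1 - t) * ‖a - c‖ + t * ‖b - c‖) := by ring
  have key := image_norm_le_of_norm_deriv_right_le_deriv_boundary
    (fun t ht => (hg t ht).continuousAt.continuousWithinAt)
    (fun t ht => (hg t (Ico_subset_Icc_self ht)).hasDerivWithinAt)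
    (by simp [g, p, B]) hB hbound (right_mem_Icc.2 zero_le_one)
  convert key using 1
  · simp [g, p]
  · simp only [B]; ring

lemma tendsto_zero_of_le_one_sub_inv_mul {e : ℕ → ℝ} (he : ∀ n, 0 ≤ e n)
    (hstep : ∀ n : ℕ, e (n + 1) ≤ (1 - 1 / (2 * ((n : ℝ) + 1))) * e n) :
    Tendsto e atTop (𝓝 0) := by
  have hsq : ∀ n : ℕ, e n ^ 2 ≤ e 0 ^ 2 * (1 / ((n : ℝ) + 1)) := by
    intro n
    induction n with
    | zero => simp
    | succ n ih =>
      have hw : (0 : ℝ) < n + 1 := by positivity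
      have hrate : (1 - 1 / (2 * ((n : ℝ) + 1))) ^ 2 * (1 / ((n : ℝ) + 1))
          ≤ 1 / (((n + 1 : ℕ) : ℝ) + 1) := by
        push_cast
        rw [one_sub_div (by positivity), div_pow, div_mul_div_comm,
          div_le_div_iff₀ (by positivity) (by positivity)]
        nlinarith
      have hfac : 0 ≤ 1 - 1 / (2 * ((n : ℝ) + 1)) := by
        rw [sub_nonneg, div_le_one (by positivity)]; linarith
      calc e (n + 1) ^ 2 ≤ ((1 - 1 / (2 * ((n : ℝ) + 1))) * e n) ^ 2 :=
            pow_le_pow_left₀ (he _) (hstep n) 2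
        _ = (1 - 1 / (2 * ((n : ℝ) + 1))) ^ 2 * e n ^ 2 := by ring
        _ ≤ (1 - 1 / (2 * ((n : ℝ) + 1))) ^ 2 * (e 0 ^ 2 * (1 / ((n : ℝ) + 1))) := by gcongr
        _ = e 0 ^ 2 * ((1 - 1 / (2 * ((n : ℝ) + 1))) ^ 2 * (1 / ((n : ℝ) + 1))) := by ring
        _ ≤ e 0 ^ 2 * (1 / (((n + 1 : ℕ) : ℝ) + 1)) := by gcongr
  have hsq_lim : Tendsto (fun n => e n ^ 2) atTop (𝓝 0) := by
    refine squeeze_zero (fun n => sq_nonneg _) hsq ?_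
    simpa using tendsto_one_div_add_atTop_nhds_zero_nat.const_mul (e 0 ^ 2)
  simpa [Real.sqrt_sq (he _)] using hsq_lim.sqrt

section ChordMap

/-- The estimate satisfied by `x ↦ x - A⁻¹ F x` on a ball around `c` when `A = F' c` and
`A⁻¹ F'` is `β`-Lipschitz. -/
def ChordEstimateOn {X : Type*} [NormedAddCommGroup X] (G : X → X) (c : X) (β r : ℝ) : Prop :=
  ∀ a ∈ closedBall c r, ∀ b ∈ closedBall c r,
    ‖G b - G a‖ ≤ β * ((‖a - c‖ + ‖b - c‖) / 2) * ‖b - a‖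

variable {X : Type*} [NormedAddCommGroup X] {G : X → X} {c : X} {α β : ℝ}

lemma norm_iterate_sub_le (hc : ‖G c - c‖ ≤ α) (hG : ChordEstimateOn G c β (2 * α))
    (hβ : 0 ≤ β) (hαβ : α * β ≤ 1 / 2) (n : ℕ) :
    ‖G^[n] c - c‖ ≤ 2 * α * (1 - 1 / ((n : ℝ) + 1)) := by
  have hα : 0 ≤ α := (norm_nonneg _).trans hc
  induction n with
  | zero => simp
  | succ n ih =>
    set s := ‖G^[n] c - c‖
    have hq : 0 < 1 / ((n : ℝ) + 1) := by positivity
    have hmem : G^[n] c ∈ closedBall c (2 * α) := by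
      rw [mem_closedBall, dist_eq_norm]; nlinarith
    have hs : ‖G^[n + 1] c - c‖ ≤ β * (s / 2) * s + α := by
      have h := hG c (mem_closedBall_self (by positivity)) _ hmem
      rw [sub_self, norm_zero, zero_add] at h
      calc ‖G^[n + 1] c - c‖ = ‖(G (G^[n] c) - G c) + (G c - c)‖ := by
            rw [iterate_succ_apply']; abel_nf
        _ ≤ β * (s / 2) * s + α := (norm_add_le _ _).trans (add_le_add h hc)
    refine hs.trans ?_
    have hs0 : 0 ≤ s := norm_nonneg _
    have hrate : 1 / ((n : ℝ) + 2) ≤ 1 / ((n : ℝ) + 1) - (1 / ((n : ℝ) + 1)) ^ 2 / 2 := by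
      rw [div_pow, ← sub_nonneg]
      field_simp
      ring_nf
      positivity
    push_cast
    rw [show (n : ℝ) + 1 + 1 = n + 2 by ring]
    generalize 1 / ((n : ℝ) + 1) = q at *
    have hsq : s * s ≤ (2 * α * (1 - q)) * (2 * α * (1 - q)) := mul_self_le_mul_self hs0 ih
    nlinarith [mul_le_mul_of_nonneg_left hsq hβ, mul_nonneg hα (sq_nonneg (1 - q)),
      mul_le_mul_of_nonneg_left hrate hα]

lemma norm_sub_iterate_succ_le (hc : ‖G c - c‖ ≤ α) (hG : ChordEstimateOn G c β (2 * α))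
    (hβ : 0 ≤ β) (hαβ : α * β ≤ 1 / 2) {u : X} (hu : u ∈ closedBall c (2 * α))
    (hfix : IsFixedPt G u) (n : ℕ) :
    ‖u - G^[n + 1] c‖ ≤ (1 - 1 / (2 * ((n : ℝ) + 1))) * ‖u - G^[n] c‖ := by
  have hα : 0 ≤ α := (norm_nonneg _).trans hc
  have hs := norm_iterate_sub_le hc hG hβ hαβ n
  have hr : ‖u - c‖ ≤ 2 * α := by rwa [mem_closedBall, dist_eq_norm] at hu
  have hq : 0 < 1 / ((n : ℝ) + 1) := by positivity
  have hq1 : 1 / ((n : ℝ) + 1) ≤ 1 := by rw [div_le_one (by positivity)]; linarith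
  have hmem : G^[n] c ∈ closedBall c (2 * α) := by
    rw [mem_closedBall, dist_eq_norm]; nlinarith
  have hfac : β * ((‖G^[n] c - c‖ + ‖u - c‖) / 2) ≤ 1 - 1 / (2 * ((n : ℝ) + 1)) := by
    rw [show 1 / (2 * ((n : ℝ) + 1)) = 1 / ((n : ℝ) + 1) / 2 by field_simp]
    generalize 1 / ((n : ℝ) + 1) = q at *
    nlinarith [mul_le_mul_of_nonneg_left hs hβ, mul_le_mul_of_nonneg_left hr hβ,
      mul_le_mul_of_nonneg_right hαβ (by linarith : (0 : ℝ) ≤ 2 - q)]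
  calc ‖u - G^[n + 1] c‖ = ‖G u - G (G^[n] c)‖ := by rw [iterate_succ_apply', hfix.eq]
    _ ≤ β * ((‖G^[n] c - c‖ + ‖u - c‖) / 2) * ‖u - G^[n] c‖ := hG _ hmem u hu
    _ ≤ (1 - 1 / (2 * ((n : ℝ) + 1))) * ‖u - G^[n] c‖ := by gcongr

theorem tendsto_iterate_of_isFixedPt (hc : ‖G c - c‖ ≤ α) (hG : ChordEstimateOn G c β (2 * α))
    (hβ : 0 ≤ β) (hαβ : α * β ≤ 1 / 2) {u : X} (hu : u ∈ closedBall c (2 * α))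
    (hfix : IsFixedPt G u) : Tendsto (fun n => G^[n] c) atTop (𝓝 u) := by
  rw [tendsto_iff_norm_sub_tendsto_zero]
  simp_rw [norm_sub_rev _ u]
  exact tendsto_zero_of_le_one_sub_inv_mul (fun n => norm_nonneg _)
    (norm_sub_iterate_succ_le hc hG hβ hαβ hu hfix)

theorem eq_of_isFixedPt_of_mem_closedBall (hc : ‖G c - c‖ ≤ α) (hG : ChordEstimateOn G c β (2 * α))
    (hβ : 0 ≤ β) (hαβ : α * β ≤ 1 / 2) {u₁ u₂ : X} (hu₁ : u₁ ∈ closedBall c (2 * α))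
    (hu₂ : u₂ ∈ closedBall c (2 * α)) (hfix₁ : IsFixedPt G u₁) (hfix₂ : IsFixedPt G u₂) :
    u₁ = u₂ :=
  tendsto_nhds_unique (tendsto_iterate_of_isFixedPt hc hG hβ hαβ hu₁ hfix₁)
    (tendsto_iterate_of_isFixedPt hc hG hβ hαβ hu₂ hfix₂)

end ChordMap

theorem newton_kantorovich_uniqueness_general
    {X Y : Type*} [NormedAddCommGroup X] [NormedSpace ℝ X]
    [NormedAddCommGroup Y] [NormedSpace ℝ Y]
    (uhat : X) (α β δ : ℝ) (hβ : 0 < β) (hδ : 0 < δ)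
    (F : X → Y) (F' : X → X →L[ℝ] Y)
    (hderiv : ∀ v ∈ Metric.ball uhat (2 * α + δ), HasFDerivAt F (F' v) v)
    (A : X ≃L[ℝ] Y) (hA : (A : X →L[ℝ] Y) = F' uhat)
    (hα' : ‖(A.symm : Y →L[ℝ] X) (F uhat)‖ ≤ α)
    (hβ' : ∀ v ∈ Metric.ball uhat (2 * α + δ), ∀ w ∈ Metric.ball uhat (2 * α + δ),
      ‖(A.symm : Y →L[ℝ] X).comp (F' v - F' w)‖ ≤ β * ‖v - w‖)
    (hαβ : α * β ≤ 1 / 2) :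
    ∀ u₁ ∈ Metric.closedBall uhat (2 * α), ∀ u₂ ∈ Metric.closedBall uhat (2 * α),
      F u₁ = 0 → F u₂ = 0 → u₁ = u₂ := by
  set T : Y →L[ℝ] X := (A.symm : Y →L[ℝ] X)
  have hα : 0 ≤ α := (norm_nonneg _).trans hα'
  have hball : closedBall uhat (2 * α) ⊆ ball uhat (2 * α + δ) :=
    closedBall_subset_ball (by linarith)
  have hT : ∀ v ∈ ball uhat (2 * α + δ),
      ‖T.comp (F' v) - ContinuousLinearMap.id ℝ X‖ ≤ β * ‖v - uhat‖ := by
    intro v hv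
    rw [← A.coe_symm_comp_coe, hA, ← ContinuousLinearMap.comp_sub]
    exact hβ' v hv uhat (mem_ball_self (by linarith))
  have hG : ChordEstimateOn (fun x => x - T (F x)) uhat β (2 * α) := by
    intro a ha b hb
    have hseg : segment ℝ a b ⊆ ball uhat (2 * α + δ) :=
      ((convex_closedBall uhat (2 * α)).segment_subset ha hb).trans hball
    calc ‖(b - T (F b)) - (a - T (F a))‖
        = ‖T (F b) - T (F a) - ContinuousLinearMap.id ℝ X (b - a)‖ := by
          rw [← norm_neg, ContinuousLinearMap.id_apply]; congr 1; abel
      _ ≤ _ := norm_image_sub_sub_le_of_hasFDerivAt_segment hβ.le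
          (fun x hx => T.hasFDerivAt.comp x (hderiv x (hseg hx))) (fun x hx => hT x (hseg hx))
  intro u₁ hu₁ u₂ hu₂ hF₁ hF₂
  refine eq_of_isFixedPt_of_mem_closedBall (by simpa using hα') hG hβ.le hαβ hu₁ hu₂ ?_ ?_
  · simp [IsFixedPt, hF₁]
  · simp [IsFixedPt, hF₂]

/-- Affine-invariant Newton–Kantorovich theorem (uniqueness part). -/
theorem newton_kantorovich_uniqueness
    {X Y : Type*} [NormedAddCommGroup X] [NormedSpace ℝ X] [CompleteSpace X]
    [NormedAddCommGroup Y] [NormedSpace ℝ Y] [CompleteSpace Y]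
    (uhat : X) (α β δ : ℝ) (hα : 0 < α) (hβ : 0 < β) (hδ : 0 < δ)
    (F : X → Y) (F' : X → X →L[ℝ] Y)
    (hderiv : ∀ v ∈ Metric.ball uhat (2 * α + δ), HasFDerivAt F (F' v) v)
    (A : X ≃L[ℝ] Y) (hA : (A : X →L[ℝ] Y) = F' uhat)
    (hα' : ‖(A.symm : Y →L[ℝ] X) (F uhat)‖ ≤ α)
    (hβ' : ∀ v ∈ Metric.ball uhat (2 * α + δ), ∀ w ∈ Metric.ball uhat (2 * α + δ),
      ‖(A.symm : Y →L[ℝ] X).comp (F' v - F' w)‖ ≤ β * ‖v - w‖)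
    (hαβ : α * β ≤ 1 / 2) :
    ∀ u₁ ∈ Metric.closedBall uhat (2 * α), ∀ u₂ ∈ Metric.closedBall uhat (2 * α),
      F u₁ = 0 → F u₂ = 0 → u₁ = u₂ :=
  newton_kantorovich_uniqueness_general uhat α β δ hβ hδ F F' hderiv A hA hα' hβ' hαβ
end

section
/- Nonnegativity criterion from an H¹₀-error bound (Theorem 1, Lipschitz formulation): Let N ≥ 1, let Ω ⊆ ℝ^N be a bounded open set, and let λ₁ > 0 and 0 ≤ λ < λ₁ be reals. Let n ≥ 1, and for each i ∈ {1,…,n} let aᵢ ≥ 0, pᵢ > 1 and Cᵢ > 0 be reals. Let f : ℝ → ℝ be continuous with −f(−t) ≤ λt + Σ_{i=1}^n aᵢ t^{pᵢ} for all t ≥ 0. Assume: (Poincaré inequality) λ₁ ∫ v(x)² dx ≤ ∫ ‖fderiv ℝ v x‖² dx for every Lipschitz test function v on Ω; (Sobolev embedding) for each i, (∫ |v(x)|^{pᵢ+1} dx)^{1/(pᵢ+1)} ≤ Cᵢ (∫ ‖fderiv ℝ v x‖² dx)^{1/2} for every Lipschitz test function v on Ω. Let û and u be Lipschitz test functions on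 Ω such that u is a weak solution of −Δu = f(u), i.e., ∫ ⟨∇u(x), ∇v(x)⟩ dx = ∫ f(u(x)) v(x) dx for every Lipschitz test function v on Ω. Let ρ ≥ 0 satisfy ∫ ‖fderiv ℝ (u − û) x‖² dx ≤ ρ². If Σ_{i=1}^n aᵢ Cᵢ² ( (∫ (û_-(x))^{pᵢ+1} dx)^{1/(pᵢ+1)} + Cᵢ ρ )^{pᵢ−1} < 1 − λ/λ₁, then u(x) ≥ 0 for all x ∈ ℝ^N. -/
open MeasureTheory Real Set
open scoped RealInnerProductSpace

/-- A Lipschitz test function on an open set `Ω ⊆ ℝ^N`: a Lipschitz function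
vanishing outside `Ω`. -/
def IsLipTest {N : ℕ} (Ω : Set (EuclideanSpace ℝ (Fin N)))
    (v : EuclideanSpace ℝ (Fin N) → ℝ) : Prop :=
  (∃ K, LipschitzWith K v) ∧ ∀ x, x ∉ Ω → v x = 0

/-!
Testing the equation with `w = u₋` gives `‖∇w‖² = -∫ f(u) w ≤ λ ‖w‖₂² + ∑ aᵢ ‖w‖_{qᵢ}^{qᵢ}`,
`qᵢ = pᵢ + 1`. Poincaré bounds the first term by `(λ/λ₁) ‖∇w‖²`. Since `w ≤ û₋ + |u - û|`
pointwise, Minkowski and Sobolev give `‖w‖_{qᵢ} ≤ ‖û₋‖_{qᵢ} + Cᵢρ`, and writing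
`‖w‖_{qᵢ}^{qᵢ} = ‖w‖_{qᵢ}^{pᵢ-1} ‖w‖_{qᵢ}²` with Sobolev once more bounds the i-th term by
`aᵢ Cᵢ² (‖û₋‖_{qᵢ} + Cᵢρ)^{pᵢ-1} ‖∇w‖²`. The hypothesis then forces `‖∇w‖ = 0`, so `w = 0`.

As `w` is merely Lipschitz, one tests with the truncations `(u - c)₋` for levels `c ↑ 0` whose
level sets `{u = c}` are null (all but countably many are): there `∇(u - c)₋ = -1_{u<c} ∇u`
a.e., and `-∫ f(u) w`, the limit of their energies, stands in for `‖∇w‖²`.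
-/

open Filter Topology

theorem Bornology.IsBounded.hasCompactSupport {X M : Type*} [PseudoMetricSpace X] [ProperSpace X]
    [Zero M] {Ω : Set X} (hΩ : Bornology.IsBounded Ω) {v : X → M} (hv : ∀ x ∉ Ω, v x = 0) :
    HasCompactSupport v :=
  HasCompactSupport.intro' hΩ.isCompact_closure isClosed_closure fun x hx ↦
    hv x fun h ↦ hx (subset_closure h)

theorem Measurable.exists_seq_neg_tendsto_zero_measure_level_eq_zero {α : Type*}
    [MeasurableSpace α] {μ : Measure α} [SFinite μ] {u : α → ℝ} (hu : Measurable u) :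
    ∃ c : ℕ → ℝ, (∀ k, c k < 0 ∧ μ {x | u x = c k} = 0) ∧ Tendsto c atTop (𝓝 0) := by
  have hdense : Dense {t : ℝ | 0 < μ {x | u x = t}}ᶜ :=
    (Measure.countable_meas_level_set_pos hu).dense_compl ℝ
  obtain ⟨c, -, hc, hlim⟩ := hdense.exists_seq_strictMono_tendsto 0
  exact ⟨c, fun k ↦ ⟨(hc k).1, by simpa using (hc k).2⟩, hlim⟩

section Truncation

variable {E : Type*} [NormedAddCommGroup E] [MeasurableSpace E] {μ : Measure E}
  {u : E → ℝ} {c : ℝ}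

theorem ae_fderiv_max_sub_eq_zero_or_neg [NormedSpace ℝ E] (hu : Continuous u)
    (hc : μ {x | u x = c} = 0) :
    ∀ᵐ x ∂μ, fderiv ℝ (fun y ↦ max (c - u y) 0) x = 0 ∨
      fderiv ℝ (fun y ↦ max (c - u y) 0) x = -fderiv ℝ u x := by
  have hne : ∀ᵐ x ∂μ, u x ≠ c := measure_eq_zero_iff_ae_notMem.1 hc
  filter_upwards [hne] with x hx
  rcases hx.lt_or_gt with hlt | hgt
  · right
    have hloc : (fun y ↦ max (c - u y) 0) =ᶠ[𝓝 x] fun y ↦ c - u y := by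
      filter_upwards [(isOpen_lt hu continuous_const).mem_nhds hlt] with y hy
      exact max_eq_left (sub_nonneg.2 (le_of_lt hy))
    rw [hloc.fderiv_eq, fderiv_const_sub]
  · left
    have hloc : (fun y ↦ max (c - u y) 0) =ᶠ[𝓝 x] fun _ ↦ 0 := by
      filter_upwards [(isOpen_lt continuous_const hu).mem_nhds hgt] with y hy
      exact max_eq_right (sub_nonpos.2 (le_of_lt hy))
    rw [hloc.fderiv_eq, fderiv_const_apply]

theorem integral_inner_gradient_max_sub [InnerProductSpace ℝ E] [CompleteSpace E]
    (hu : Continuous u) (hc : μ {x | u x = c} = 0) :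
    ∫ x, ⟪gradient u x, gradient (fun y ↦ max (c - u y) 0) x⟫ ∂μ =
      -∫ x, ‖fderiv ℝ (fun y ↦ max (c - u y) 0) x‖ ^ 2 ∂μ := by
  rw [← integral_neg]
  refine integral_congr_ae ?_
  filter_upwards [ae_fderiv_max_sub_eq_zero_or_neg hu hc] with x hx
  rcases hx with h | h
  · simp [gradient, h]
  · have hgrad : gradient (fun y ↦ max (c - u y) 0) x = -gradient u x := by
      simp [gradient, h]
    rw [← (InnerProductSpace.toDual ℝ E).symm.norm_map, ← gradient, hgrad, inner_neg_right,
      real_inner_self_eq_norm_sq, norm_neg]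

end Truncation

section LpBounds

variable {α : Type*} [MeasurableSpace α] {μ : Measure α}

theorem tendsto_integral_abs_rpow_of_abs_le {F : ℕ → α → ℝ} {f : α → ℝ} {q : ℝ} (hq : 0 ≤ q)
    (hF : ∀ k, AEStronglyMeasurable (F k) μ) (hf : Integrable (fun x ↦ |f x| ^ q) μ)
    (hFf : ∀ k x, |F k x| ≤ |f x|) (hlim : ∀ x, Tendsto (fun k ↦ F k x) atTop (𝓝 (f x))) :
    Tendsto (fun k ↦ ∫ x, |F k x| ^ q ∂μ) atTop (𝓝 (∫ x, |f x| ^ q ∂μ)) := by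
  refine tendsto_integral_of_dominated_convergence _
    (fun k ↦ ((hF k).norm.aemeasurable.pow_const q).aestronglyMeasurable) hf
    (fun k ↦ ae_of_all _ fun x ↦ ?_) (ae_of_all _ fun x ↦ ?_)
  · rw [Real.norm_of_nonneg (by positivity)]
    exact Real.rpow_le_rpow (abs_nonneg _) (hFf k x) hq
  · exact ((Real.continuous_rpow_const hq).tendsto _).comp (hlim x).abs

theorem ofReal_integral_abs_rpow_rpow_one_div {f : α → ℝ} {q : ℝ} (hq : 0 < q)
    (hf : MemLp f (ENNReal.ofReal q) μ) :
    ENNReal.ofReal ((∫ x, |f x| ^ q ∂μ) ^ (1 / q)) = eLpNorm f (ENNReal.ofReal q) μ := by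
  rw [hf.eLpNorm_eq_integral_rpow_norm (by simpa using hq) ENNReal.ofReal_ne_top,
    ENNReal.toReal_ofReal hq.le, one_div]
  simp only [Real.norm_eq_abs]

theorem integral_abs_rpow_rpow_one_div_le_add {f g h : α → ℝ} {q : ℝ} (hq : 1 ≤ q)
    (hf : AEStronglyMeasurable f μ) (hg : MemLp g (ENNReal.ofReal q) μ)
    (hh : MemLp h (ENNReal.ofReal q) μ) (hfgh : ∀ x, |f x| ≤ |g x| + |h x|) :
    (∫ x, |f x| ^ q ∂μ) ^ (1 / q) ≤
      (∫ x, |g x| ^ q ∂μ) ^ (1 / q) + (∫ x, |h x| ^ q ∂μ) ^ (1 / q) := by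
  have hq0 : 0 < q := by linarith
  have hgh : MemLp (fun x ↦ |g x| + |h x|) (ENNReal.ofReal q) μ := hg.abs.add hh.abs
  have hf' : MemLp f (ENNReal.ofReal q) μ :=
    hgh.of_le hf (ae_of_all _ fun x ↦ (hfgh x).trans_eq (abs_of_nonneg (by positivity)).symm)
  rw [← ENNReal.ofReal_le_ofReal_iff (by positivity), ENNReal.ofReal_add (by positivity)
    (by positivity), ofReal_integral_abs_rpow_rpow_one_div hq0 hf',
    ofReal_integral_abs_rpow_rpow_one_div hq0 hg, ofReal_integral_abs_rpow_rpow_one_div hq0 hh]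
  calc eLpNorm f (ENNReal.ofReal q) μ
      ≤ eLpNorm (fun x ↦ |g x| + |h x|) (ENNReal.ofReal q) μ := eLpNorm_mono_real hfgh
    _ ≤ eLpNorm (fun x ↦ |g x|) (ENNReal.ofReal q) μ +
          eLpNorm (fun x ↦ |h x|) (ENNReal.ofReal q) μ :=
        eLpNorm_add_le hg.abs.1 hh.abs.1 (by simpa using hq)
    _ = _ := by simp_rw [← Real.norm_eq_abs, eLpNorm_norm]

end LpBounds

theorem abs_max_sub_le_abs_max_neg {c : ℝ} (hc : c ≤ 0) (t : ℝ) :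
    |max (c - t) 0| ≤ |max (-t) 0| := by
  rw [abs_of_nonneg (le_max_right _ _), abs_of_nonneg (le_max_right _ _)]
  exact max_le_max (by linarith) le_rfl

theorem tendsto_max_sub_zero {c : ℕ → ℝ} (hc : Tendsto c atTop (𝓝 0)) (t : ℝ) :
    Tendsto (fun k ↦ max (c k - t) 0) atTop (𝓝 (max (-t) 0)) := by
  simpa using (hc.sub_const t).max tendsto_const_nhds

theorem abs_max_neg_le_add (s t : ℝ) : |max (-s) 0| ≤ |max (-t) 0| + |s - t| := by
  have h := abs_max_sub_max_le_abs (-s) (-t) 0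
  rw [neg_sub_neg, abs_sub_comm t s] at h
  linarith [abs_sub_abs_le_abs_sub (max (-s) 0) (max (-t) 0)]

theorem neg_mul_max_neg_le {f : ℝ → ℝ} {lam : ℝ} {s : Finset ℕ} {a p : ℕ → ℝ}
    (ha : ∀ i ∈ s, 0 ≤ a i) (hfb : ∀ t : ℝ, 0 ≤ t → -f (-t) ≤ lam * t + ∑ i ∈ s, a i * t ^ p i)
    (t : ℝ) :
    -(f t * max (-t) 0) ≤ lam * max (-t) 0 ^ 2 + ∑ i ∈ s, a i * |max (-t) 0| ^ (p i + 1) := by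
  rcases le_or_gt 0 t with ht | ht
  · have hmax : max (-t) 0 = 0 := max_eq_right (by linarith)
    rw [hmax]
    simpa using Finset.sum_nonneg fun i hi ↦ mul_nonneg (ha i hi) (Real.rpow_nonneg le_rfl _)
  · have hmax : max (-t) 0 = -t := max_eq_left (by linarith)
    have hpos : 0 < -t := by linarith
    rw [hmax, abs_of_pos hpos]
    calc -(f t * -t) = -f (-(-t)) * -t := by rw [neg_neg]; ring
      _ ≤ (lam * -t + ∑ i ∈ s, a i * (-t) ^ p i) * -t :=
          mul_le_mul_of_nonneg_right (hfb _ hpos.le) hpos.le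
      _ = lam * (-t) ^ 2 + ∑ i ∈ s, a i * (-t) ^ (p i + 1) := by
          simp_rw [Real.rpow_add_one hpos.ne', add_mul, Finset.sum_mul, mul_assoc, sq]

theorem le_rpow_mul_of_rpow_one_div_le {I M C E p : ℝ} (hI : 0 ≤ I) (hp : 1 ≤ p) (hE : 0 ≤ E)
    (hM : I ^ (1 / (p + 1)) ≤ M) (hC : I ^ (1 / (p + 1)) ≤ C * E ^ ((1 : ℝ) / 2)) :
    I ≤ C ^ 2 * M ^ (p - 1) * E := by
  set s := I ^ (1 / (p + 1)) with hs
  have hs0 : 0 ≤ s := Real.rpow_nonneg hI _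
  have hIs : I = s ^ (p - 1) * s ^ 2 := by
    rw [← Real.rpow_natCast, ← Real.rpow_add' hs0 (by norm_num; linarith), hs,
      ← Real.rpow_mul hI]
    norm_num
    rw [show (p + 1)⁻¹ * (p - 1 + 2) = 1 by field_simp; ring, Real.rpow_one]
  have hsq : s ^ 2 ≤ C ^ 2 * E := by
    calc s ^ 2 ≤ (C * E ^ ((1 : ℝ) / 2)) ^ 2 := pow_le_pow_left₀ hs0 hC 2
      _ = C ^ 2 * E := by
          rw [mul_pow, ← Real.rpow_natCast (E ^ _), ← Real.rpow_mul hE]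
          norm_num
  rw [hIs, mul_comm (C ^ 2), mul_assoc]
  exact mul_le_mul (Real.rpow_le_rpow hs0 hM (by linarith)) hsq (by positivity)
    (Real.rpow_nonneg (hs0.trans hM) _)

theorem eq_zero_of_mul_le_of_le_add_sum {P E lam lam₁ : ℝ} {s : Finset ℕ} {a I κ : ℕ → ℝ}
    (hlam₁ : 0 < lam₁) (hlam : 0 ≤ lam) (hP0 : 0 ≤ P) (hP : lam₁ * P ≤ E)
    (hE : E ≤ lam * P + ∑ i ∈ s, a i * I i) (hI : ∀ i ∈ s, a i * I i ≤ κ i * E)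
    (hκ : ∑ i ∈ s, κ i < 1 - lam / lam₁) :
    P = 0 := by
  have hlamP : lam * P ≤ lam / lam₁ * E :=
    calc lam * P = lam / lam₁ * (lam₁ * P) := by field_simp
      _ ≤ lam / lam₁ * E := mul_le_mul_of_nonneg_left hP (div_nonneg hlam hlam₁.le)
  have hsum : ∑ i ∈ s, a i * I i ≤ (∑ i ∈ s, κ i) * E :=
    (Finset.sum_le_sum hI).trans_eq (Finset.sum_mul _ _ _).symm
  have hE0 : 0 ≤ E := (mul_nonneg hlam₁.le hP0).trans hP
  have hE : E ≤ 0 := by nlinarith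
  exact le_antisymm (by nlinarith) hP0

namespace IsLipTest

variable {N : ℕ} {Ω : Set (EuclideanSpace ℝ (Fin N))} {u v : EuclideanSpace ℝ (Fin N) → ℝ}

theorem continuous (hv : IsLipTest Ω v) : Continuous v :=
  let ⟨_, hK⟩ := hv.1
  hK.continuous

theorem sub (hu : IsLipTest Ω u) (hv : IsLipTest Ω v) : IsLipTest Ω (u - v) := by
  obtain ⟨⟨Ku, hKu⟩, hu0⟩ := hu
  obtain ⟨⟨Kv, hKv⟩, hv0⟩ := hv
  exact ⟨⟨Ku + Kv, hKu.sub hKv⟩, fun x hx ↦ by simp [hu0 x hx, hv0 x hx]⟩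

theorem max_sub (hu : IsLipTest Ω u) {c : ℝ} (hc : c ≤ 0) :
    IsLipTest Ω fun x ↦ max (c - u x) 0 := by
  obtain ⟨⟨K, hK⟩, hu0⟩ := hu
  exact ⟨⟨0 + K, ((LipschitzWith.const c).sub hK).max_const 0⟩,
    fun x hx ↦ by simpa [hu0 x hx] using hc⟩

theorem negPart (hu : IsLipTest Ω u) : IsLipTest Ω fun x ↦ max (-u x) 0 := by
  simpa using hu.max_sub le_rfl

theorem memLp (hΩ : Bornology.IsBounded Ω) (hv : IsLipTest Ω v) (p : ENNReal) : MemLp v p :=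
  hv.continuous.memLp_of_hasCompactSupport (hΩ.hasCompactSupport hv.2)

theorem integrable_abs_rpow (hΩ : Bornology.IsBounded Ω) (hv : IsLipTest Ω v) {q : ℝ} (hq : 0 < q) :
    Integrable fun x ↦ |v x| ^ q := by
  simpa [← Real.norm_eq_abs, ENNReal.toReal_ofReal hq.le] using
    (hv.memLp hΩ (ENNReal.ofReal q)).integrable_norm_rpow (by simpa using hq) ENNReal.ofReal_ne_top

theorem eq_zero_of_integral_sq_eq_zero (hΩ : Bornology.IsBounded Ω) (hv : IsLipTest Ω v)
    (h : ∫ x, v x ^ 2 = 0) : v = 0 := by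
  have hae : (fun x ↦ v x ^ 2) =ᵐ[volume] 0 :=
    (integral_eq_zero_iff_of_nonneg (fun x ↦ sq_nonneg _) ((hv.memLp hΩ 2).integrable_sq)).1 h
  have hsq := (Continuous.ae_eq_iff_eq volume (hv.continuous.pow 2) continuous_const).1 hae
  funext x
  exact pow_eq_zero_iff two_ne_zero |>.1 (congr_fun hsq x)

theorem neg_integral_mul_negPart_le (hΩ : Bornology.IsBounded Ω) (hu : IsLipTest Ω u)
    {f : ℝ → ℝ} (hf : Continuous f) {lam : ℝ} {s : Finset ℕ} {a p : ℕ → ℝ}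
    (ha : ∀ i ∈ s, 0 ≤ a i) (hp : ∀ i ∈ s, 0 < p i + 1)
    (hfb : ∀ t : ℝ, 0 ≤ t → -f (-t) ≤ lam * t + ∑ i ∈ s, a i * t ^ p i) :
    -∫ x, f (u x) * max (-u x) 0 ≤
      lam * (∫ x, max (-u x) 0 ^ 2) + ∑ i ∈ s, a i * ∫ x, |max (-u x) 0| ^ (p i + 1) := by
  have hw := hu.negPart
  have hpow : ∀ i ∈ s, Integrable fun x ↦ a i * |max (-u x) 0| ^ (p i + 1) :=
    fun i hi ↦ (hw.integrable_abs_rpow hΩ (hp i hi)).const_mul _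
  have hsq : Integrable fun x ↦ max (-u x) 0 ^ 2 := (hw.memLp hΩ 2).integrable_sq
  have hlhs : Integrable fun x ↦ f (u x) * max (-u x) 0 :=
    ((hf.comp hu.continuous).mul hw.continuous).integrable_of_hasCompactSupport
      (hΩ.hasCompactSupport fun x hx ↦ by simp [hu.2 x hx])
  calc -∫ x, f (u x) * max (-u x) 0
      ≤ ∫ x, (lam * max (-u x) 0 ^ 2 + ∑ i ∈ s, a i * |max (-u x) 0| ^ (p i + 1)) := by
        rw [← integral_neg]
        exact integral_mono hlhs.neg ((hsq.const_mul lam).add (integrable_finsetSum s hpow))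
          fun x ↦ neg_mul_max_neg_le ha hfb (u x)
    _ = _ := by
        rw [integral_add (hsq.const_mul lam) (integrable_finsetSum s hpow), integral_const_mul,
          integral_finsetSum s hpow]
        simp_rw [integral_const_mul]

theorem rpow_integral_negPart_le (hΩ : Bornology.IsBounded Ω) (hu : IsLipTest Ω u)
    (hv : IsLipTest Ω v) {q C ρ : ℝ} (hq : 1 ≤ q) (hC : 0 ≤ C) (hρ : 0 ≤ ρ)
    (hS : (∫ x, |(u - v) x| ^ q) ^ (1 / q) ≤ C * (∫ x, ‖fderiv ℝ (u - v) x‖ ^ 2) ^ ((1 : ℝ) / 2))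
    (herr : ∫ x, ‖fderiv ℝ (u - v) x‖ ^ 2 ≤ ρ ^ 2) :
    (∫ x, |max (-u x) 0| ^ q) ^ (1 / q) ≤ (∫ x, max (-v x) 0 ^ q) ^ (1 / q) + C * ρ :=
  calc (∫ x, |max (-u x) 0| ^ q) ^ (1 / q)
      ≤ (∫ x, |max (-v x) 0| ^ q) ^ (1 / q) + (∫ x, |(u - v) x| ^ q) ^ (1 / q) :=
        integral_abs_rpow_rpow_one_div_le_add hq hu.negPart.continuous.aestronglyMeasurable
          (hv.negPart.memLp hΩ _) ((hu.sub hv).memLp hΩ _) fun x ↦ abs_max_neg_le_add (u x) (v x)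
    _ ≤ (∫ x, max (-v x) 0 ^ q) ^ (1 / q) + C * ρ := by
        simp only [abs_of_nonneg (le_max_right _ (0 : ℝ))]
        refine add_le_add_right (hS.trans (mul_le_mul_of_nonneg_left ?_ hC)) _
        rw [← Real.sqrt_eq_rpow, ← Real.sqrt_sq hρ]
        exact Real.sqrt_le_sqrt herr

end IsLipTest

section WeakSolution

variable {N : ℕ} {Ω : Set (EuclideanSpace ℝ (Fin N))} {u : EuclideanSpace ℝ (Fin N) → ℝ}
  {f : ℝ → ℝ}

theorem tendsto_integral_norm_fderiv_max_sub_sq (hΩ : Bornology.IsBounded Ω)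
    (hu : IsLipTest Ω u) (hf : Continuous f)
    (hweak : ∀ v, IsLipTest Ω v → ∫ x, ⟪gradient u x, gradient v x⟫ = ∫ x, f (u x) * v x)
    {c : ℕ → ℝ} (hc : ∀ k, c k ≤ 0 ∧ volume {x | u x = c k} = 0)
    (hlim : Tendsto c atTop (𝓝 0)) :
    Tendsto (fun k ↦ ∫ x, ‖fderiv ℝ (fun y ↦ max (c k - u y) 0) x‖ ^ 2) atTop
      (𝓝 (-∫ x, f (u x) * max (-u x) 0)) := by
  have henergy : ∀ k, -∫ x, f (u x) * max (c k - u x) 0 =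
      ∫ x, ‖fderiv ℝ (fun y ↦ max (c k - u y) 0) x‖ ^ 2 := fun k ↦ by
    rw [← hweak _ (hu.max_sub (hc k).1), integral_inner_gradient_max_sub hu.continuous (hc k).2,
      neg_neg]
  refine Tendsto.congr henergy (tendsto_integral_of_dominated_convergence
    (fun x ↦ |f (u x)| * |max (-u x) 0|) (fun k ↦ ?_) ?_ (fun k ↦ ae_of_all _ fun x ↦ ?_)
    (ae_of_all _ fun x ↦ ?_)).neg
  · exact ((hf.comp hu.continuous).mul
      ((continuous_const.sub hu.continuous).max continuous_const)).aestronglyMeasurable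
  · exact Continuous.integrable_of_hasCompactSupport
      ((hf.comp hu.continuous).abs.mul hu.negPart.continuous.abs)
      (hΩ.hasCompactSupport fun x hx ↦ by simp [hu.2 x hx])
  · rw [Real.norm_eq_abs, abs_mul]
    exact mul_le_mul_of_nonneg_left (abs_max_sub_le_abs_max_neg (hc k).1 _) (abs_nonneg _)
  · exact (tendsto_max_sub_zero hlim (u x)).const_mul _

theorem le_energy_negPart_of_forall_isLipTest (hΩ : Bornology.IsBounded Ω)
    (hu : IsLipTest Ω u) (hf : Continuous f)
    (hweak : ∀ v, IsLipTest Ω v → ∫ x, ⟪gradient u x, gradient v x⟫ = ∫ x, f (u x) * v x)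
    {Φ Ψ : ℝ → ℝ} (hΦ : Continuous Φ) (hΨ : Continuous Ψ) {q : ℝ} (hq : 0 < q)
    (h : ∀ v, IsLipTest Ω v → Φ (∫ x, |v x| ^ q) ≤ Ψ (∫ x, ‖fderiv ℝ v x‖ ^ 2)) :
    Φ (∫ x, |max (-u x) 0| ^ q) ≤ Ψ (-∫ x, f (u x) * max (-u x) 0) := by
  obtain ⟨c, hc, hlim⟩ :=
    hu.continuous.measurable.exists_seq_neg_tendsto_zero_measure_level_eq_zero (μ := volume)
  have hc' : ∀ k, c k ≤ 0 ∧ volume {x | u x = c k} = 0 := fun k ↦ ⟨(hc k).1.le, (hc k).2⟩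
  refine le_of_tendsto_of_tendsto' ((hΦ.tendsto _).comp ?_)
    ((hΨ.tendsto _).comp (tendsto_integral_norm_fderiv_max_sub_sq hΩ hu hf hweak hc' hlim))
    fun k ↦ h _ (hu.max_sub (hc' k).1)
  exact tendsto_integral_abs_rpow_of_abs_le hq.le
    (fun k ↦ ((continuous_const.sub hu.continuous).max continuous_const).aestronglyMeasurable)
    (hu.negPart.integrable_abs_rpow hΩ hq) (fun k x ↦ abs_max_sub_le_abs_max_neg (hc' k).1 _)
    fun x ↦ tendsto_max_sub_zero hlim (u x)

theorem mul_integral_sq_negPart_le (hΩ : Bornology.IsBounded Ω)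
    (hu : IsLipTest Ω u) (hf : Continuous f)
    (hweak : ∀ v, IsLipTest Ω v → ∫ x, ⟪gradient u x, gradient v x⟫ = ∫ x, f (u x) * v x)
    {lam₁ : ℝ} (hP : ∀ v, IsLipTest Ω v → lam₁ * ∫ x, v x ^ 2 ≤ ∫ x, ‖fderiv ℝ v x‖ ^ 2) :
    lam₁ * ∫ x, max (-u x) 0 ^ 2 ≤ -∫ x, f (u x) * max (-u x) 0 := by
  simpa [Real.rpow_two, sq_abs] using le_energy_negPart_of_forall_isLipTest hΩ hu hf hweak
    (continuous_const_mul lam₁) continuous_id two_pos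
    fun v hv ↦ by simpa [Real.rpow_two, sq_abs] using hP v hv

end WeakSolution

theorem nonneg_of_H10_error_bound_general
    {N : ℕ}
    (Ω : Set (EuclideanSpace ℝ (Fin N)))
    (hΩb : Bornology.IsBounded Ω)
    (lam₁ lam : ℝ) (hlam₁ : 0 < lam₁) (hlam0 : 0 ≤ lam)
    (n : ℕ) (a p C : ℕ → ℝ)
    (ha : ∀ i ∈ Finset.Icc 1 n, 0 ≤ a i)
    (hp : ∀ i ∈ Finset.Icc 1 n, 1 < p i)
    (hC : ∀ i ∈ Finset.Icc 1 n, 0 < C i)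
    (f : ℝ → ℝ) (hf : Continuous f)
    (hfb : ∀ t : ℝ, 0 ≤ t →
      -f (-t) ≤ lam * t + ∑ i ∈ Finset.Icc 1 n, a i * t ^ (p i))
    (hPoincare : ∀ v, IsLipTest Ω v →
      lam₁ * ∫ x, (v x) ^ 2 ≤ ∫ x, ‖fderiv ℝ v x‖ ^ 2)
    (hSobolev : ∀ i ∈ Finset.Icc 1 n, ∀ v, IsLipTest Ω v →
      (∫ x, |v x| ^ (p i + 1)) ^ (1 / (p i + 1)) ≤
        C i * (∫ x, ‖fderiv ℝ v x‖ ^ 2) ^ ((1 : ℝ) / 2))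
    (uhat u : EuclideanSpace ℝ (Fin N) → ℝ)
    (huhat : IsLipTest Ω uhat) (hu : IsLipTest Ω u)
    (hweak : ∀ v, IsLipTest Ω v →
      ∫ x, ⟪gradient u x, gradient v x⟫ = ∫ x, f (u x) * v x)
    (ρ : ℝ) (hρ : 0 ≤ ρ)
    (herr : ∫ x, ‖fderiv ℝ (u - uhat) x‖ ^ 2 ≤ ρ ^ 2)
    (hcond : ∑ i ∈ Finset.Icc 1 n,
        a i * C i ^ 2 *
          ((∫ x, (max (-uhat x) 0) ^ (p i + 1)) ^ (1 / (p i + 1)) + C i * ρ)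
            ^ (p i - 1)
        < 1 - lam / lam₁) :
    ∀ x, 0 ≤ u x := by
  have hP := mul_integral_sq_negPart_le hΩb hu hf hweak hPoincare
  have hE0 : 0 ≤ -∫ x, f (u x) * max (-u x) 0 :=
    (mul_nonneg hlam₁.le (integral_nonneg fun x ↦ sq_nonneg _)).trans hP
  have hw : ∫ x, max (-u x) 0 ^ 2 = 0 := by
    refine eq_zero_of_mul_le_of_le_add_sum hlam₁ hlam0 (integral_nonneg fun x ↦ sq_nonneg _) hP
      (hu.neg_integral_mul_negPart_le hΩb hf ha (fun i hi ↦ by linarith [hp i hi]) hfb)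
      (fun i hi ↦ ?_) hcond
    have hq : 0 < p i + 1 := by linarith [hp i hi]
    have hSob := le_energy_negPart_of_forall_isLipTest hΩb hu hf hweak
      (Real.continuous_rpow_const (by positivity))
      (continuous_const.mul (Real.continuous_rpow_const (by norm_num))) hq (hSobolev i hi)
    have hMink := hu.rpow_integral_negPart_le hΩb huhat (by linarith [hp i hi]) (hC i hi).le hρ
      (hSobolev i hi _ (hu.sub huhat)) herr
    have hI := le_rpow_mul_of_rpow_one_div_le (integral_nonneg fun x ↦ by positivity)
      (hp i hi).le hE0 hMink hSob
    simpa only [mul_assoc] using mul_le_mul_of_nonneg_left hI (ha i hi)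
  intro x
  simpa using congr_fun (hu.negPart.eq_zero_of_integral_sq_eq_zero hΩb hw) x

/-- Nonnegativity criterion from an `H¹₀`-error bound (Theorem 1, Lipschitz
formulation). -/
theorem nonneg_of_H10_error_bound
    {N : ℕ} (hN : 1 ≤ N)
    (Ω : Set (EuclideanSpace ℝ (Fin N))) (hΩo : IsOpen Ω)
    (hΩb : Bornology.IsBounded Ω)
    (lam₁ lam : ℝ) (hlam₁ : 0 < lam₁) (hlam0 : 0 ≤ lam) (hlam : lam < lam₁)
    (n : ℕ) (hn : 1 ≤ n) (a p C : ℕ → ℝ)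
    (ha : ∀ i ∈ Finset.Icc 1 n, 0 ≤ a i)
    (hp : ∀ i ∈ Finset.Icc 1 n, 1 < p i)
    (hC : ∀ i ∈ Finset.Icc 1 n, 0 < C i)
    (f : ℝ → ℝ) (hf : Continuous f)
    (hfb : ∀ t : ℝ, 0 ≤ t →
      -f (-t) ≤ lam * t + ∑ i ∈ Finset.Icc 1 n, a i * t ^ (p i))
    (hPoincare : ∀ v, IsLipTest Ω v →
      lam₁ * ∫ x, (v x) ^ 2 ≤ ∫ x, ‖fderiv ℝ v x‖ ^ 2)
    (hSobolev : ∀ i ∈ Finset.Icc 1 n, ∀ v, IsLipTest Ω v →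
      (∫ x, |v x| ^ (p i + 1)) ^ (1 / (p i + 1)) ≤
        C i * (∫ x, ‖fderiv ℝ v x‖ ^ 2) ^ ((1 : ℝ) / 2))
    (uhat u : EuclideanSpace ℝ (Fin N) → ℝ)
    (huhat : IsLipTest Ω uhat) (hu : IsLipTest Ω u)
    (hweak : ∀ v, IsLipTest Ω v →
      ∫ x, ⟪gradient u x, gradient v x⟫ = ∫ x, f (u x) * v x)
    (ρ : ℝ) (hρ : 0 ≤ ρ)
    (herr : ∫ x, ‖fderiv ℝ (u - uhat) x‖ ^ 2 ≤ ρ ^ 2)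
    (hcond : ∑ i ∈ Finset.Icc 1 n,
        a i * C i ^ 2 *
          ((∫ x, (max (-uhat x) 0) ^ (p i + 1)) ^ (1 / (p i + 1)) + C i * ρ)
            ^ (p i - 1)
        < 1 - lam / lam₁) :
    ∀ x, 0 ≤ u x :=
  nonneg_of_H10_error_bound_general Ω hΩb lam₁ lam hlam₁ hlam0 n a p C ha hp hC f hf hfb hPoincare
    hSobolev uhat u huhat hu hweak ρ hρ herr hcond
end

section
/- Sign preservation under a positive spectral bound (key lemma in the proof of Theorem 3, Lipschitz formulation): Let N ≥ 1, let Ω ⊆ ℝ^N be a bounded open set, let q : ℝ^N → ℝ be measurable with |q(x)| ≤ M for all x ∈ Ω for some real M, and let μ₁ > 0 satisfy μ₁ ∫ v(x)² dx ≤ ∫ ‖fderiv ℝ v x‖² dx − ∫ q(x) v(x)² dx for every Lipschitz test function v on Ω. Let w be a Lipschitz test function on Ω such that 0 ≤ ∫ ⟨∇w(x), ∇v(x)⟩ dx − ∫ q(x) w(x) v(x) dx for every Lipschitz test function v on Ω with v ≥ 0. Then w(x) ≥ 0 for all x ∈ ℝ^N. -/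
open MeasureTheory Real Set
open scoped RealInnerProductSpace

/-- Sign preservation under a positive spectral bound (key lemma in the proof
of Theorem 3, Lipschitz formulation). -/
theorem nonneg_of_spectral_bound
    {N : ℕ} (hN : 1 ≤ N)
    (Ω : Set (EuclideanSpace ℝ (Fin N))) (hΩo : IsOpen Ω)
    (hΩb : Bornology.IsBounded Ω)
    (q : EuclideanSpace ℝ (Fin N) → ℝ) (hq : Measurable q)
    (M : ℝ) (hqM : ∀ x ∈ Ω, |q x| ≤ M)
    (μ₁ : ℝ) (hμ₁ : 0 < μ₁)
    (hspec : ∀ v, IsLipTest Ω v →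
      μ₁ * ∫ x, (v x) ^ 2 ≤
        (∫ x, ‖fderiv ℝ v x‖ ^ 2) - ∫ x, q x * (v x) ^ 2)
    (w : EuclideanSpace ℝ (Fin N) → ℝ) (hw : IsLipTest Ω w)
    (hwpos : ∀ v, IsLipTest Ω v → (∀ x, 0 ≤ v x) →
      0 ≤ (∫ x, ⟪gradient w x, gradient v x⟫) - ∫ x, q x * w x * v x) :
    ∀ x, 0 ≤ w x := by
  obtain ⟨⟨K, hK⟩, hw0⟩ := hw
  set u : EuclideanSpace ℝ (Fin N) → ℝ := fun x => max (-(w x)) 0 with hu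
  have hulip : LipschitzWith K u := hK.neg.max_const 0
  have hu0 : ∀ x, x ∉ Ω → u x = 0 := by
    intro x hx; simp [hu, hw0 x hx]
  have huLT : IsLipTest Ω u := ⟨⟨K, hulip⟩, hu0⟩
  have hunn : ∀ x, 0 ≤ u x := fun x => le_max_right _ _
  -- pointwise gradient identity
  have hgrad : ∀ x, ⟪gradient w x, gradient u x⟫ = -‖fderiv ℝ u x‖ ^ 2 := by
    intro x
    rcases lt_trichotomy (w x) 0 with hx | hx | hx
    · have hev : u =ᶠ[nhds x] fun y => -(w y) := by
        have ho : IsOpen {y | w y < 0} := isOpen_lt hK.continuous continuous_const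
        filter_upwards [ho.mem_nhds hx] with y hy
        simpa [hu] using max_eq_left (by linarith [hy] : (0:ℝ) ≤ -(w y))
      have hf : fderiv ℝ u x = -(fderiv ℝ w x) := by
        rw [hev.fderiv_eq]; exact fderiv_neg
      have hg : gradient u x = -(gradient w x) := by
        simp [gradient, hf]
      have hnorm : ‖gradient w x‖ = ‖fderiv ℝ w x‖ :=
        (InnerProductSpace.toDual ℝ _).symm.norm_map _
      rw [hg, hf, inner_neg_right, real_inner_self_eq_norm_sq, norm_neg, hnorm]
    · -- w x = 0 : x is a global minimum of u, so fderiv u x = 0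
      have hmin : IsLocalMin u x := by
        apply Filter.Eventually.of_forall
        intro y; simp [hu, hx]
      have hf : fderiv ℝ u x = 0 := hmin.fderiv_eq_zero
      have hg : gradient u x = 0 := by simp [gradient, hf]
      simp [hg, hf]
    · have hev : u =ᶠ[nhds x] fun _ => (0:ℝ) := by
        have ho : IsOpen {y | 0 < w y} := isOpen_lt continuous_const hK.continuous
        filter_upwards [ho.mem_nhds hx] with y hy
        simpa [hu] using max_eq_right (by linarith [hy] : -(w y) ≤ (0:ℝ))
      have hf : fderiv ℝ u x = 0 := by rw [hev.fderiv_eq]; exact fderiv_const_apply 0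
      have hg : gradient u x = 0 := by simp [gradient, hf]
      simp [hg, hf]
  -- pointwise product identity
  have hprod : ∀ x, q x * w x * u x = -(q x * (u x) ^ 2) := by
    intro x
    rcases le_or_gt (w x) 0 with hx | hx
    · have : u x = -(w x) := max_eq_left (by linarith)
      rw [this]; ring
    · have : u x = 0 := max_eq_right (by linarith)
      rw [this]; ring
  -- combine
  have h1 : (∫ x, ⟪gradient w x, gradient u x⟫) = -∫ x, ‖fderiv ℝ u x‖ ^ 2 := by
    rw [← integral_neg]; exact integral_congr_ae (Filter.Eventually.of_forall hgrad)
  have h2 : (∫ x, q x * w x * u x) = -∫ x, q x * (u x) ^ 2 := by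
    rw [← integral_neg]; exact integral_congr_ae (Filter.Eventually.of_forall hprod)
  have hA := hwpos u huLT hunn
  rw [h1, h2] at hA
  have hB := hspec u huLT
  have hI0 : (0:ℝ) ≤ ∫ x, (u x) ^ 2 := integral_nonneg fun x => sq_nonneg _
  have hIzero : (∫ x, (u x) ^ 2) = 0 := le_antisymm (by nlinarith) hI0
  -- integrability
  have hcont : Continuous u := hulip.continuous
  have hsupp : Function.support u ⊆ Ω := by
    intro x hx; by_contra h; exact hx (hu0 x h)
  have hcs : HasCompactSupport u :=
    hΩb.isCompact_closure.of_isClosed_subset isClosed_closure (closure_mono hsupp)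
  have hcs2 : HasCompactSupport fun x => (u x) ^ 2 := by
    have : (fun x => (u x) ^ 2) = u * u := by ext x; simp [Pi.mul_apply, sq]
    rw [this]; exact hcs.mul_right
  have hint : Integrable (fun x => (u x) ^ 2) :=
    (hcont.pow 2).integrable_of_hasCompactSupport hcs2
  have hae : (fun x => (u x) ^ 2) =ᵐ[volume] 0 :=
    (integral_eq_zero_iff_of_nonneg (fun x => sq_nonneg _) hint).mp hIzero
  have haeu : u =ᵐ[volume] 0 := by
    filter_upwards [hae] with x hx
    exact (pow_eq_zero_iff two_ne_zero).mp hx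
  have hueq : u = 0 := (hcont.ae_eq_iff_eq volume continuous_const).mp haeu
  intro x
  have : u x = 0 := by rw [hueq]; rfl
  have : -(w x) ≤ 0 := by
    have h0 : max (-(w x)) 0 = 0 := this
    by_contra hcon
    push_neg at hcon
    rw [max_eq_left hcon.le] at h0
    linarith
  linarith
end

section
/- Nonexistence of positive solutions for λ ≥ λ₁ with nonnegative superlinear coefficients (one-dimensional case, λ₁((0,1)) = π²): Let n ≥ 2 be a natural number, λ ≥ π², and a : ℕ → ℝ with a i ≥ 0 for every i ∈ {2,…,n} and a j > 0 for some j ∈ {2,…,n}. Suppose u : ℝ → ℝ is continuous on the closed interval [0,1], twice continuously differentiable on the open interval (0,1) (ContDiffOn ℝ 2 u (Ioo 0 1)), satisfies u(0) = 0, u(1) = 0, u(x) > 0 for all x ∈ (0,1), and −(deriv (deriv u)) x = λ u(x) + Σ_{i=2}^n a i · u(x)^i for all x ∈ (0,1). Then a contradiction follows (no such u exists). -/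
/-!
Compare `u` with the first eigenfunction `sin (π x)` through their Wronskian
`W = u' sin (π x) - π u cos (π x)`, whose derivative is `sin (π x) (u'' + π² u)`. For `λ ≥ π²`
and nonnegative coefficients, one of them positive, this is strictly negative on `(0, 1)`, so
`W` is strictly decreasing. But `u'' < 0` makes `u` concave, and concavity together with
`u 0 = u 1 = 0` gives `|W| ≤ 2 π u`, so `W` tends to `0` at both endpoints: a decreasing
function with the same limit at both ends is constant, a contradiction.
-/

open Set Real Filter Topology

theorem Finset.sum_mul_pow_pos {s : Finset ℕ} {a : ℕ → ℝ} {t : ℝ}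
    (ha : ∀ i ∈ s, 0 ≤ a i) (hj : ∃ j ∈ s, 0 < a j) (ht : 0 < t) :
    0 < ∑ i ∈ s, a i * t ^ i := by
  obtain ⟨j, hjs, hja⟩ := hj
  exact Finset.sum_pos' (fun i hi => mul_nonneg (ha i hi) (pow_nonneg ht.le _))
    ⟨j, hjs, mul_pos hja (pow_pos ht _)⟩

noncomputable def sinWronskian (ω : ℝ) (u : ℝ → ℝ) (x : ℝ) : ℝ :=
  deriv u x * sin (ω * x) - ω * u x * cos (ω * x)

theorem hasDerivAt_sinWronskian {ω x u'' : ℝ} {u : ℝ → ℝ} (hu : DifferentiableAt ℝ u x)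
    (hu' : HasDerivAt (deriv u) u'' x) :
    HasDerivAt (sinWronskian ω u) (sin (ω * x) * (u'' + ω ^ 2 * u x)) x := by
  have hlin : HasDerivAt (fun y => ω * y) ω x := by
    simpa using (hasDerivAt_id x).const_mul ω
  have hsin := (hasDerivAt_sin (ω * x)).comp x hlin
  have hcos := (hasDerivAt_cos (ω * x)).comp x hlin
  exact ((hu'.mul hsin).sub ((hu.hasDerivAt.const_mul ω).mul hcos)).congr_deriv
    (by simp only [Function.comp_apply]; ring)

theorem abs_sinWronskian_pi_le {u : ℝ → ℝ} (hconc : ConcaveOn ℝ (Icc 0 1) u)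
    (hu0 : u 0 = 0) (hu1 : u 1 = 0) {x : ℝ} (hx : x ∈ Ioo 0 1)
    (hdiff : DifferentiableAt ℝ u x) :
    |sinWronskian π u x| ≤ 2 * π * u x := by
  obtain ⟨hx0, hx1⟩ := hx
  have hleft : deriv u x * x ≤ u x := by
    have := hconc.deriv_le_slope (left_mem_Icc.2 zero_le_one) ⟨hx0.le, hx1.le⟩ hx0 hdiff
    rwa [slope_def_field, hu0, sub_zero, sub_zero, le_div_iff₀ hx0] at this
  have hright : -u x ≤ deriv u x * (1 - x) := by
    have := hconc.slope_le_deriv ⟨hx0.le, hx1.le⟩ (right_mem_Icc.2 zero_le_one) hx1 hdiff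
    rwa [slope_def_field, hu1, zero_sub, div_le_iff₀ (sub_pos.2 hx1)] at this
  have hux : 0 ≤ u x := by
    nlinarith [mul_le_mul_of_nonneg_right hleft (sub_pos.2 hx1).le,
      mul_le_mul_of_nonneg_right hright hx0.le]
  have hs0 : 0 ≤ sin (π * x) :=
    sin_nonneg_of_nonneg_of_le_pi (by positivity) (by nlinarith [pi_pos])
  have hs_left : sin (π * x) ≤ π * x := sin_le (by positivity)
  have hs_right : sin (π * x) ≤ π * (1 - x) := by
    rw [← sin_pi_sub, mul_one_sub]
    exact sin_le (by nlinarith [pi_pos])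
  have hderiv : |deriv u x * sin (π * x)| ≤ π * u x := by
    rw [abs_le]
    rcases le_total 0 (deriv u x) with h | h
    · constructor <;> nlinarith [mul_le_mul_of_nonneg_left hs_left h, mul_nonneg h hs0]
    · constructor <;> nlinarith [mul_le_mul_of_nonpos_left hs_right h,
        mul_nonpos_of_nonpos_of_nonneg h hs0]
  have hcos : |π * u x * cos (π * x)| ≤ π * u x := by
    rw [abs_mul, abs_of_nonneg (by positivity : 0 ≤ π * u x)]
    exact mul_le_of_le_one_right (by positivity) (abs_cos_le_one _)
  calc |sinWronskian π u x| ≤ |deriv u x * sin (π * x)| + |π * u x * cos (π * x)| := abs_sub _ _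
    _ ≤ 2 * π * u x := by linarith

theorem AntitoneOn.eq_zero_of_tendsto_zero {f : ℝ → ℝ} {a b : ℝ} (hf : AntitoneOn f (Ioo a b))
    (ha : Tendsto f (𝓝[>] a) (𝓝 0)) (hb : Tendsto f (𝓝[<] b) (𝓝 0)) :
    ∀ x ∈ Ioo a b, f x = 0 := by
  intro x hx
  apply le_antisymm
  · refine ge_of_tendsto ha ?_
    filter_upwards [Ioo_mem_nhdsGT hx.1] with y hy
    exact hf ⟨hy.1, hy.2.trans hx.2⟩ hx hy.2.le
  · refine le_of_tendsto hb ?_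
    filter_upwards [Ioo_mem_nhdsLT hx.2] with y hy
    exact hf hx ⟨hx.1.trans hy.1, hy.2⟩ hy.1.le

theorem sinWronskian_pi_eq_zero_of_antitoneOn {u : ℝ → ℝ} (hconc : ConcaveOn ℝ (Icc 0 1) u)
    (huc : ContinuousOn u (Icc 0 1)) (hu0 : u 0 = 0) (hu1 : u 1 = 0)
    (hdiff : ∀ x ∈ Ioo (0 : ℝ) 1, DifferentiableAt ℝ u x)
    (hanti : AntitoneOn (sinWronskian π u) (Ioo 0 1)) :
    ∀ x ∈ Ioo (0 : ℝ) 1, sinWronskian π u x = 0 := by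
  have htendsto : ∀ l : Filter ℝ, Ioo 0 1 ∈ l → Tendsto u l (𝓝 0) →
      Tendsto (sinWronskian π u) l (𝓝 0) := fun l hl hu =>
    squeeze_zero_norm' (Filter.mem_of_superset hl fun x hx =>
      abs_sinWronskian_pi_le hconc hu0 hu1 hx (hdiff x hx)) (by simpa using hu.const_mul (2 * π))
  have hlim0 : Tendsto u (𝓝[>] 0) (𝓝 0) := by
    have := ((huc 0 (left_mem_Icc.2 zero_le_one)).mono Ioo_subset_Icc_self).tendsto
    rwa [nhdsWithin_Ioo_eq_nhdsGT zero_lt_one, hu0] at this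
  have hlim1 : Tendsto u (𝓝[<] 1) (𝓝 0) := by
    have := ((huc 1 (right_mem_Icc.2 zero_le_one)).mono Ioo_subset_Icc_self).tendsto
    rwa [nhdsWithin_Ioo_eq_nhdsLT zero_lt_one, hu1] at this
  exact hanti.eq_zero_of_tendsto_zero (htendsto _ (Ioo_mem_nhdsGT zero_lt_one) hlim0)
    (htendsto _ (Ioo_mem_nhdsLT zero_lt_one) hlim1)

theorem exists_deriv_deriv_add_pi_sq_mul_nonneg {u : ℝ → ℝ} (huc : ContinuousOn u (Icc 0 1))
    (hud : ContDiffOn ℝ 2 u (Ioo 0 1)) (hu0 : u 0 = 0) (hu1 : u 1 = 0)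
    (hnonneg : ∀ x ∈ Ioo (0 : ℝ) 1, 0 ≤ u x) :
    ∃ x ∈ Ioo (0 : ℝ) 1, 0 ≤ deriv (deriv u) x + π ^ 2 * u x := by
  by_contra! hneg
  have hdiff : ∀ x ∈ Ioo (0 : ℝ) 1, DifferentiableAt ℝ u x := fun x hx =>
    (hud.differentiableOn (by norm_num)).differentiableAt (isOpen_Ioo.mem_nhds hx)
  have hdiff' : DifferentiableOn ℝ (deriv u) (Ioo 0 1) :=
    (hud.deriv_of_isOpen isOpen_Ioo (by norm_num)).differentiableOn one_ne_zero
  have hconc : ConcaveOn ℝ (Icc 0 1) u := by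
    refine concaveOn_of_deriv2_nonpos (convex_Icc 0 1) huc ?_ ?_ ?_ <;> rw [interior_Icc]
    · exact fun x hx => (hdiff x hx).differentiableWithinAt
    · exact hdiff'
    · intro x hx
      rw [Function.iterate_succ_apply, Function.iterate_one]
      nlinarith [hneg x hx, hnonneg x hx, sq_nonneg π]
  have hW : ∀ x ∈ Ioo (0 : ℝ) 1, HasDerivAt (sinWronskian π u)
      (sin (π * x) * (deriv (deriv u) x + π ^ 2 * u x)) x := fun x hx =>
    hasDerivAt_sinWronskian (hdiff x hx)
      (hdiff'.differentiableAt (isOpen_Ioo.mem_nhds hx)).hasDerivAt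
  have hanti : StrictAntiOn (sinWronskian π u) (Ioo 0 1) := by
    refine strictAntiOn_of_deriv_neg (convex_Ioo 0 1)
      (fun x hx => (hW x hx).continuousAt.continuousWithinAt) fun x hx => ?_
    rw [interior_Ioo] at hx
    rw [(hW x hx).deriv]
    exact mul_neg_of_pos_of_neg
      (sin_pos_of_pos_of_lt_pi (mul_pos pi_pos hx.1) (by nlinarith [pi_pos, hx.2])) (hneg x hx)
  have hzero := sinWronskian_pi_eq_zero_of_antitoneOn hconc huc hu0 hu1 hdiff hanti.antitoneOn
  have h14 : (1 / 4 : ℝ) ∈ Ioo 0 1 := by norm_num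
  have h34 : (3 / 4 : ℝ) ∈ Ioo 0 1 := by norm_num
  exact (hanti h14 h34 (by norm_num)).ne (by rw [hzero _ h14, hzero _ h34])

theorem no_positive_solution_of_lam_ge_lam1_general
    (n : ℕ) (lam : ℝ) (hlam : Real.pi ^ 2 ≤ lam)
    (a : ℕ → ℝ) (ha : ∀ i ∈ Finset.Icc 2 n, 0 ≤ a i)
    (hj : ∃ j ∈ Finset.Icc 2 n, 0 < a j)
    (u : ℝ → ℝ)
    (huc : ContinuousOn u (Icc 0 1))
    (hud : ContDiffOn ℝ 2 u (Ioo 0 1))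
    (hu0 : u 0 = 0) (hu1 : u 1 = 0)
    (hupos : ∀ x ∈ Ioo (0 : ℝ) 1, 0 < u x)
    (heq : ∀ x ∈ Ioo (0 : ℝ) 1,
      -(deriv (deriv u) x) = lam * u x + ∑ i ∈ Finset.Icc 2 n, a i * u x ^ i) :
    False := by
  obtain ⟨x, hx, hsuper⟩ := exists_deriv_deriv_add_pi_sq_mul_nonneg huc hud hu0 hu1
    fun x hx => (hupos x hx).le
  have hsum := Finset.sum_mul_pow_pos ha hj (hupos x hx)
  have hlin : π ^ 2 * u x ≤ lam * u x := mul_le_mul_of_nonneg_right hlam (hupos x hx).le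
  linarith [heq x hx, hsum]

/-- Nonexistence of positive solutions for `λ ≥ λ₁((0,1)) = π²` with
nonnegative superlinear coefficients (one-dimensional case). -/
theorem no_positive_solution_of_lam_ge_lam1
    (n : ℕ) (hn : 2 ≤ n) (lam : ℝ) (hlam : Real.pi ^ 2 ≤ lam)
    (a : ℕ → ℝ) (ha : ∀ i ∈ Finset.Icc 2 n, 0 ≤ a i)
    (hj : ∃ j ∈ Finset.Icc 2 n, 0 < a j)
    (u : ℝ → ℝ)
    (huc : ContinuousOn u (Icc 0 1))
    (hud : ContDiffOn ℝ 2 u (Ioo 0 1))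
    (hu0 : u 0 = 0) (hu1 : u 1 = 0)
    (hupos : ∀ x ∈ Ioo (0 : ℝ) 1, 0 < u x)
    (heq : ∀ x ∈ Ioo (0 : ℝ) 1,
      -(deriv (deriv u) x) = lam * u x + ∑ i ∈ Finset.Icc 2 n, a i * u x ^ i) :
    False :=
  no_positive_solution_of_lam_ge_lam1_general n lam hlam a ha hj u huc hud hu0 hu1 hupos heq
end

section
/- Poincaré inequality on the unit square with the sharp constant 2π² (the value λ₁((0,1)²) = 2π², equivalently the embedding constant C₂ = (2π²)^{−1/2} used in the paper): Let v : ℝ² → ℝ be continuously differentiable (ContDiff ℝ 1) with v(x) = 0 for every x outside the open unit square Q = {x : 0 < x₀ < 1 and 0 < x₁ < 1}. Then 2π² ∫ v(x)² dx ≤ ∫ ‖fderiv ℝ v x‖² dx, where the integrals are over ℝ² with respect to Lebesgue measure. -/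
/-!
The one-dimensional inequality `π² ∫₀¹ f² ≤ ∫₀¹ f'²` for `f(0) = f(1) = 0` follows from the
pointwise identity
`f'² - π² f² = (f' - π cot(πx) f)² + (π cot(πx) f²)'`
on `(0, 1)`, whose last term integrates to zero because `f² / sin(πx) → 0` at both endpoints;
`sin(πx)` is the first Dirichlet eigenfunction and `π cot(πx)` its logarithmic derivative.
Applying this on every horizontal and every vertical segment of the square and integrating with
Fubini bounds `π² ∫ v²` by `∫ (∂₀v)²` and by `∫ (∂₁v)²`, whose sum is `∫ ‖∇v‖²`.
-/

open MeasureTheory Real Set Filter Topology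

theorem tendsto_sq_div_nhdsNE_of_hasDerivAt {f g : ℝ → ℝ} {a df dg : ℝ}
    (hf : HasDerivAt f df a) (hg : HasDerivAt g dg a) (hfa : f a = 0) (hga : g a = 0)
    (hdg : dg ≠ 0) : Tendsto (fun x => f x ^ 2 / g x) (𝓝[≠] a) (𝓝 0) := by
  -- `f x ^ 2 / g x = slope f a x ^ 2 * (x - a) / slope g a x` for `x ≠ a`
  have hsub : Tendsto (fun x => x - a) (𝓝[≠] a) (𝓝 (a - a)) :=
    ((continuous_sub_right a).tendsto a).mono_left nhdsWithin_le_nhds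
  have hlim := ((hasDerivAt_iff_tendsto_slope.1 hf).pow 2 |>.mul hsub).div
    (hasDerivAt_iff_tendsto_slope.1 hg) hdg
  rw [sub_self, mul_zero, zero_div] at hlim
  refine hlim.congr' (eventually_nhdsWithin_of_forall fun x hx => ?_)
  have : x - a ≠ 0 := sub_ne_zero.2 hx
  simp only [Pi.div_apply, slope_def_field, hfa, hga, sub_zero]
  field_simp

theorem hasDerivAt_sin_pi_mul (x : ℝ) :
    HasDerivAt (fun y => sin (π * y)) (π * cos (π * x)) x := by
  simpa [mul_comm] using ((hasDerivAt_id x).const_mul π).sin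

theorem hasDerivAt_pi_mul_cos_mul_sq_div_sin {f : ℝ → ℝ} {d x : ℝ} (hf : HasDerivAt f d x)
    (hx : sin (π * x) ≠ 0) :
    HasDerivAt (fun y => π * cos (π * y) * (f y ^ 2 / sin (π * y)))
      (d ^ 2 - π ^ 2 * f x ^ 2 - (d - π * cos (π * x) * f x / sin (π * x)) ^ 2) x := by
  have hcos : HasDerivAt (fun y => cos (π * y)) (-(π * sin (π * x))) x := by
    simpa [mul_comm] using ((hasDerivAt_id x).const_mul π).cos
  refine ((hcos.const_mul π).mul ((hf.pow 2).div (hasDerivAt_sin_pi_mul x) hx)).congr_deriv ?_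
  simp only [Pi.div_apply, Pi.pow_apply]
  field_simp
  ring

theorem continuousAt_pi_mul_cos_mul_sq_div_sin {f : ℝ → ℝ} {d a : ℝ} (hf : HasDerivAt f d a)
    (hfa : f a = 0) (ha : sin (π * a) = 0) (ha' : cos (π * a) ≠ 0) :
    ContinuousAt (fun y => π * cos (π * y) * (f y ^ 2 / sin (π * y))) a := by
  rw [← continuousWithinAt_compl_self, ContinuousWithinAt]
  have hcos : Tendsto (fun y => π * cos (π * y)) (𝓝[≠] a) (𝓝 (π * cos (π * a))) :=
    (by fun_prop : Continuous fun y => π * cos (π * y)).continuousAt.tendsto.mono_left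
      nhdsWithin_le_nhds
  simpa [hfa] using hcos.mul (tendsto_sq_div_nhdsNE_of_hasDerivAt hf (hasDerivAt_sin_pi_mul a)
    hfa ha (mul_ne_zero pi_ne_zero ha'))

theorem pi_sq_mul_intervalIntegral_sq_le {f f' : ℝ → ℝ} (hf : ∀ x, HasDerivAt f (f' x) x)
    (hf' : Continuous f') (h0 : f 0 = 0) (h1 : f 1 = 0) :
    π ^ 2 * ∫ x in (0 : ℝ)..1, f x ^ 2 ≤ ∫ x in (0 : ℝ)..1, f' x ^ 2 := by
  set K : ℝ → ℝ := fun y => π * cos (π * y) * (f y ^ 2 / sin (π * y))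
  have hf_cont : Continuous f := continuous_iff_continuousAt.2 fun x => (hf x).continuousAt
  have hsin : ∀ x ∈ Ioo (0 : ℝ) 1, sin (π * x) ≠ 0 := fun x hx =>
    (sin_pos_of_pos_of_lt_pi (by nlinarith [pi_pos, hx.1]) (by nlinarith [pi_pos, hx.2])).ne'
  have hK_cont : ContinuousOn K (Icc 0 1) := by
    intro x hx
    refine ContinuousAt.continuousWithinAt ?_
    rcases eq_or_lt_of_le hx.1 with rfl | hx0
    · exact continuousAt_pi_mul_cos_mul_sq_div_sin (hf 0) h0 (by simp) (by simp)
    rcases eq_or_lt_of_le hx.2 with rfl | hx1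
    · exact continuousAt_pi_mul_cos_mul_sq_div_sin (hf 1) h1 (by simp) (by simp)
    exact (hasDerivAt_pi_mul_cos_mul_sq_div_sin (hf x) (hsin x ⟨hx0, hx1⟩)).continuousAt
  have hK := intervalIntegral.sub_le_integral_of_hasDeriv_right_of_le zero_le_one hK_cont
    (fun x hx => (hasDerivAt_pi_mul_cos_mul_sq_div_sin (hf x) (hsin x hx)).hasDerivWithinAt)
    (by fun_prop : Continuous fun x => f' x ^ 2 - π ^ 2 * f x ^ 2).integrableOn_Icc
    (fun x _ => sub_le_self _ (sq_nonneg _))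
  have hsplit : ∫ x in (0 : ℝ)..1, f' x ^ 2 - π ^ 2 * f x ^ 2
      = (∫ x in (0 : ℝ)..1, f' x ^ 2) - π ^ 2 * ∫ x in (0 : ℝ)..1, f x ^ 2 := by
    rw [intervalIntegral.integral_sub
      ((by fun_prop : Continuous fun x => f' x ^ 2).intervalIntegrable 0 1)
      ((by fun_prop : Continuous fun x => π ^ 2 * f x ^ 2).intervalIntegrable 0 1),
      intervalIntegral.integral_const_mul]
  simp only [K, h0, h1, hsplit, ne_eq, OfNat.ofNat_ne_zero, not_false_eq_true, zero_pow, zero_div,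
    mul_zero, sub_self, sub_nonneg] at hK
  exact hK

theorem integral_eq_intervalIntegral_of_eq_zero_off_Icc {g : ℝ → ℝ} {a b : ℝ} (hab : a ≤ b)
    (hg : ∀ x ∉ Icc a b, g x = 0) : ∫ x, g x = ∫ x in a..b, g x := by
  rw [← setIntegral_eq_integral_of_forall_compl_eq_zero hg, integral_Icc_eq_integral_Ioc,
    intervalIntegral.integral_of_le hab]

theorem pi_sq_mul_integral_sq_le {f f' : ℝ → ℝ} (hf : ∀ x, HasDerivAt f (f' x) x)
    (hf' : Continuous f') (hzero : ∀ x ∉ Ioo (0 : ℝ) 1, f x = 0) :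
    π ^ 2 * ∫ x, f x ^ 2 ≤ ∫ x, f' x ^ 2 := by
  have hzero' : ∀ x ∉ Icc (0 : ℝ) 1, f x = 0 := fun x hx =>
    hzero x fun h => hx (Ioo_subset_Icc_self h)
  have hderiv_zero : ∀ x ∉ Icc (0 : ℝ) 1, f' x = 0 := by
    intro x hx
    have hloc : f =ᶠ[𝓝 x] fun _ => 0 :=
      eventually_of_mem (isClosed_Icc.isOpen_compl.mem_nhds hx) hzero'
    exact (hf x).unique ((hasDerivAt_const x 0).congr_of_eventuallyEq hloc)
  rw [integral_eq_intervalIntegral_of_eq_zero_off_Icc zero_le_one fun x hx => by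
      simp [hzero' x hx],
    integral_eq_intervalIntegral_of_eq_zero_off_Icc zero_le_one fun x hx => by
      simp [hderiv_zero x hx]]
  exact pi_sq_mul_intervalIntegral_sq_le hf hf' (hzero 0 (by simp)) (hzero 1 (by simp))

theorem pi_sq_mul_integral_sq_comp_line_le {E : Type*} [NormedAddCommGroup E] [NormedSpace ℝ E]
    {v : E → ℝ} (hv : ContDiff ℝ 1 v) (p w : E)
    (hzero : ∀ t ∉ Ioo (0 : ℝ) 1, v (p + t • w) = 0) :
    π ^ 2 * ∫ t : ℝ, v (p + t • w) ^ 2 ≤ ∫ t : ℝ, fderiv ℝ v (p + t • w) w ^ 2 := by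
  refine pi_sq_mul_integral_sq_le (fun t => ?_) ?_ hzero
  · have hline : HasDerivAt (fun t : ℝ => p + t • w) w t := by
      simpa using ((hasDerivAt_id t).smul_const w).const_add p
    exact (hv.differentiable one_ne_zero _).hasFDerivAt.comp_hasDerivAt t hline
  · exact ((hv.continuous_fderiv one_ne_zero).comp
      (by fun_prop : Continuous fun t : ℝ => p + t • w)).clm_apply continuous_const

theorem norm_sq_eq_sum_sq_apply_single {ι : Type*} [Fintype ι] [DecidableEq ι]
    (L : EuclideanSpace ℝ ι →L[ℝ] ℝ) :
    ‖L‖ ^ 2 = ∑ i, L (EuclideanSpace.single i 1) ^ 2 := by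
  set y := (InnerProductSpace.toDual ℝ (EuclideanSpace ℝ ι)).symm L
  have hL : L = InnerProductSpace.toDual ℝ _ y := by simp [y]
  rw [hL, LinearIsometryEquiv.norm_map, EuclideanSpace.real_norm_sq_eq]
  simp [EuclideanSpace.inner_single_right]

theorem integrable_sq_of_hasCompactSupport {E : Type*} [NormedAddCommGroup E] [MeasurableSpace E]
    [OpensMeasurableSpace E] {μ : Measure E} [IsFiniteMeasureOnCompacts μ] {g : E → ℝ}
    (hg : Continuous g) (hsupp : HasCompactSupport g) : Integrable (fun x => g x ^ 2) μ := by
  have : HasCompactSupport fun x => g x ^ 2 :=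
    hsupp.comp_left (g := fun y : ℝ => y ^ 2) (by simp)
  exact (hg.pow 2).integrable_of_hasCompactSupport this

def finTwoMeasurableEquivProd : EuclideanSpace ℝ (Fin 2) ≃ᵐ ℝ × ℝ :=
  (MeasurableEquiv.toLp 2 (Fin 2 → ℝ)).symm.trans MeasurableEquiv.finTwoArrow

theorem measurePreserving_finTwoMeasurableEquivProd_symm :
    MeasurePreserving finTwoMeasurableEquivProd.symm :=
  ((volume_preserving_finTwoArrow ℝ).comp (PiLp.volume_preserving_ofLp (Fin 2))).symm _

theorem integral_euclideanSpace_fin_two (g : EuclideanSpace ℝ (Fin 2) → ℝ) :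
    ∫ x, g x = ∫ z : ℝ × ℝ, g !₂[z.1, z.2] :=
  (measurePreserving_finTwoMeasurableEquivProd_symm.integral_comp' g).symm

theorem MeasureTheory.Integrable.comp_toLp_fin_two {g : EuclideanSpace ℝ (Fin 2) → ℝ}
    (hg : Integrable g) : Integrable fun z : ℝ × ℝ => g !₂[z.1, z.2] :=
  (measurePreserving_finTwoMeasurableEquivProd_symm.integrable_comp_emb
    (MeasurableEquiv.measurableEmbedding _)).2 hg

theorem const_mul_integral_le_of_forall_slice_fst {F G : EuclideanSpace ℝ (Fin 2) → ℝ} {c : ℝ}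
    (hF : Integrable F) (hG : Integrable G) (h : ∀ b, c * ∫ a, F !₂[a, b] ≤ ∫ a, G !₂[a, b]) :
    c * ∫ x, F x ≤ ∫ x, G x := by
  have hF' := hF.comp_toLp_fin_two
  have hG' := hG.comp_toLp_fin_two
  rw [Measure.volume_eq_prod] at hF' hG'
  rw [integral_euclideanSpace_fin_two, integral_euclideanSpace_fin_two G, Measure.volume_eq_prod,
    integral_prod_symm _ hF', integral_prod_symm _ hG', ← integral_const_mul]
  exact integral_mono (hF'.swap.integral_prod_left.const_mul c) hG'.swap.integral_prod_left h

theorem const_mul_integral_le_of_forall_slice_snd {F G : EuclideanSpace ℝ (Fin 2) → ℝ} {c : ℝ}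
    (hF : Integrable F) (hG : Integrable G) (h : ∀ a, c * ∫ b, F !₂[a, b] ≤ ∫ b, G !₂[a, b]) :
    c * ∫ x, F x ≤ ∫ x, G x := by
  have hF' := hF.comp_toLp_fin_two
  have hG' := hG.comp_toLp_fin_two
  rw [Measure.volume_eq_prod] at hF' hG'
  rw [integral_euclideanSpace_fin_two, integral_euclideanSpace_fin_two G, Measure.volume_eq_prod,
    integral_prod _ hF', integral_prod _ hG', ← integral_const_mul]
  exact integral_mono (hF'.integral_prod_left.const_mul c) hG'.integral_prod_left h

theorem integrable_sq_fderiv_apply {E : Type*} [NormedAddCommGroup E] [NormedSpace ℝ E]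
    [MeasurableSpace E] [OpensMeasurableSpace E] {μ : Measure E} [IsFiniteMeasureOnCompacts μ]
    {v : E → ℝ} (hv : ContDiff ℝ 1 v) (hsupp : HasCompactSupport v) (w : E) :
    Integrable (fun x => fderiv ℝ v x w ^ 2) μ :=
  integrable_sq_of_hasCompactSupport ((hv.continuous_fderiv one_ne_zero).clm_apply
    continuous_const) (hsupp.fderiv_apply (𝕜 := ℝ) w)

theorem hasCompactSupport_of_eq_zero_off_unitSquare {v : EuclideanSpace ℝ (Fin 2) → ℝ}
    (hv0 : ∀ x : EuclideanSpace ℝ (Fin 2),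
      x ∉ {y : EuclideanSpace ℝ (Fin 2) | 0 < y 0 ∧ y 0 < 1 ∧ 0 < y 1 ∧ y 1 < 1} → v x = 0) :
    HasCompactSupport v := by
  refine HasCompactSupport.intro ((isCompact_Icc (a := (0 : Fin 2 → ℝ)) (b := 1)).image
    (PiLp.continuous_toLp 2 _)) fun x hx => hv0 x ?_
  rintro ⟨h0, h0', h1, h1'⟩
  refine hx ⟨x.ofLp, ⟨fun i => ?_, fun i => ?_⟩, rfl⟩ <;> fin_cases i <;> simp <;> linarith

theorem pi_sq_mul_integral_sq_le_integral_sq_fderiv_single {v : EuclideanSpace ℝ (Fin 2) → ℝ}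
    (hv : ContDiff ℝ 1 v)
    (hv0 : ∀ x : EuclideanSpace ℝ (Fin 2),
      x ∉ {y : EuclideanSpace ℝ (Fin 2) | 0 < y 0 ∧ y 0 < 1 ∧ 0 < y 1 ∧ y 1 < 1} → v x = 0)
    (i : Fin 2) :
    π ^ 2 * ∫ x, v x ^ 2 ≤ ∫ x, fderiv ℝ v x (EuclideanSpace.single i 1) ^ 2 := by
  have hsupp := hasCompactSupport_of_eq_zero_off_unitSquare hv0
  have hF := integrable_sq_of_hasCompactSupport (μ := volume) hv.continuous hsupp
  have hG := integrable_sq_fderiv_apply (μ := volume) hv hsupp (EuclideanSpace.single i 1)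
  fin_cases i <;> simp only [Fin.zero_eta, Fin.mk_one]
  · refine const_mul_integral_le_of_forall_slice_fst hF hG fun b => ?_
    have hline : ∀ a, !₂[a, b] = !₂[0, b] + a • EuclideanSpace.single 0 1 := by
      intro a; ext j; fin_cases j <;> simp
    simpa only [← hline] using pi_sq_mul_integral_sq_comp_line_le hv !₂[0, b]
      (EuclideanSpace.single 0 1) fun a ha =>
        hv0 _ fun h => ha ⟨by simpa using h.1, by simpa using h.2.1⟩
  · refine const_mul_integral_le_of_forall_slice_snd hF hG fun a => ?_
    have hline : ∀ b, !₂[a, b] = !₂[a, 0] + b • EuclideanSpace.single 1 1 := by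
      intro b; ext j; fin_cases j <;> simp
    simpa only [← hline] using pi_sq_mul_integral_sq_comp_line_le hv !₂[a, 0]
      (EuclideanSpace.single 1 1) fun b hb =>
        hv0 _ fun h => hb ⟨by simpa using h.2.2.1, by simpa using h.2.2.2⟩

/-- Poincaré inequality on the unit square with the sharp constant
`λ₁((0,1)²) = 2π²`. -/
theorem poincare_unit_square
    (v : EuclideanSpace ℝ (Fin 2) → ℝ) (hv : ContDiff ℝ 1 v)
    (hv0 : ∀ x : EuclideanSpace ℝ (Fin 2),
      x ∉ {y : EuclideanSpace ℝ (Fin 2) |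
        0 < y 0 ∧ y 0 < 1 ∧ 0 < y 1 ∧ y 1 < 1} → v x = 0) :
    2 * Real.pi ^ 2 * ∫ x, (v x) ^ 2 ≤ ∫ x, ‖fderiv ℝ v x‖ ^ 2 := by
  have hsupp := hasCompactSupport_of_eq_zero_off_unitSquare hv0
  have hgrad : ∫ x, ‖fderiv ℝ v x‖ ^ 2 = (∫ x, fderiv ℝ v x (EuclideanSpace.single 0 1) ^ 2)
      + ∫ x, fderiv ℝ v x (EuclideanSpace.single 1 1) ^ 2 := by
    simp_rw [norm_sq_eq_sum_sq_apply_single, Fin.sum_univ_two]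
    exact integral_add (integrable_sq_fderiv_apply hv hsupp _)
      (integrable_sq_fderiv_apply hv hsupp _)
  have h0 := pi_sq_mul_integral_sq_le_integral_sq_fderiv_single hv hv0 0
  have h1 := pi_sq_mul_integral_sq_le_integral_sq_fderiv_single hv hv0 1
  linarith
end

section
/- Almost-everywhere formula for the derivative of the negative part of a Lipschitz function: Let N ≥ 1 and let v : ℝ^N → ℝ be Lipschitz. Then for almost every x ∈ ℝ^N (with respect to Lebesgue measure), fderiv ℝ (fun y => max (−v(y)) 0) x = if v(x) < 0 then −(fderiv ℝ v x) else 0. -/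
open MeasureTheory Filter Topology

section NegPart

variable {E : Type*} [NormedAddCommGroup E] [NormedSpace ℝ E] {v : E → ℝ} {x : E}

/-- Here `x` is a global minimum of the negative part, so its derivative vanishes whether or not
it is differentiable at `x`. -/
theorem fderiv_negPart_of_nonneg (hx : 0 ≤ v x) : fderiv ℝ (fun y => (v y)⁻) x = 0 :=
  IsLocalMin.fderiv_eq_zero <| Eventually.of_forall fun y => by
    simp only [negPart_eq_zero.mpr hx, negPart_nonneg]

theorem fderiv_negPart_of_neg (hv : ContinuousAt v x) (hx : v x < 0) :
    fderiv ℝ (fun y => (v y)⁻) x = -fderiv ℝ v x := by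
  have hnear : (fun y => (v y)⁻) =ᶠ[𝓝 x] fun y => -v y :=
    (hv.eventually (eventually_lt_nhds hx)).mono fun y hy => negPart_eq_neg.mpr hy.le
  rw [hnear.fderiv_eq, fderiv_fun_neg]

theorem fderiv_negPart (hv : ContinuousAt v x) :
    fderiv ℝ (fun y => (v y)⁻) x = if v x < 0 then -fderiv ℝ v x else 0 := by
  split_ifs with hx
  · exact fderiv_negPart_of_neg hv hx
  · exact fderiv_negPart_of_nonneg (not_lt.mp hx)

end NegPart

theorem fderiv_negpart_ae_general
    {N : ℕ}
    (v : EuclideanSpace ℝ (Fin N) → ℝ) (K : NNReal) (hv : LipschitzWith K v) :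
    ∀ᵐ x : EuclideanSpace ℝ (Fin N),
      fderiv ℝ (fun y => max (-v y) 0) x =
        if v x < 0 then -(fderiv ℝ v x) else 0 :=
  -- `(v y)⁻` is definitionally `max (-v y) 0`, and the formula holds at every point.
  Eventually.of_forall fun _ => fderiv_negPart hv.continuous.continuousAt

/-- Almost-everywhere formula for the derivative of the negative part of a
Lipschitz function. -/
theorem fderiv_negpart_ae
    {N : ℕ} (hN : 1 ≤ N)
    (v : EuclideanSpace ℝ (Fin N) → ℝ) (K : NNReal) (hv : LipschitzWith K v) :
    ∀ᵐ x : EuclideanSpace ℝ (Fin N),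
      fderiv ℝ (fun y => max (-v y) 0) x =
        if v x < 0 then -(fderiv ℝ v x) else 0 :=
  fderiv_negpart_ae_general v K hv
end
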